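/- arXiv:2010.05401 — 8 statements merged into one kernel-verified Lean document; each statement's English description precedes it below -/
import Mathlib

section
/- Let Ω = ℂ, g₀ ≡ 1 and q ≡ 0. Then the Toda equation Toda(0,g) has no solution: there is no tuple of smooth functions (w₁,…,w_r) : ℂ → ℝ^r with Σᵢ wᵢ = 0 satisfying Δw₁ = −e^{−w₁+w₂}, Δwᵢ = e^{−w_{i−1}+wᵢ} − e^{−wᵢ+w_{i+1}} for 2 ≤ i ≤ r−1, and Δw_r = e^{−w_{r−1}+w_r}. -/
/-- The operator `Δ = ∂_z ∂_z̄ = (1/4)(∂²/∂x² + ∂²/∂y²)` acting on functions `ℂ → ℝ`. -/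
noncomputable def lap (f : ℂ → ℝ) (z : ℂ) : ℝ :=
  (1 / 4) * (iteratedFDeriv ℝ 2 f z ![1, 1] + iteratedFDeriv ℝ 2 f z ![Complex.I, Complex.I])

/-!
Write `a_j = e^{w_{j+1} - w_j}` for `0 < j < r` and `a_0 = a_r = 0`, so that the system reads
`Δ w_j = a_{j-1} - a_j`. The potential `v = ∑ (2j - r - 1) w_j` has coefficients with constant
difference `2`, so summation by parts gives `Δ v = 2 ∑ a_j`. Summing by parts the other way,
`v = ∑ c_k (w_{k+1} - w_k)` with `c_k = k (r - k) ≥ 0`, so `v / ∑ c_k` is a weighted mean of the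
exponents of the `a_k` and `e^{v / ∑ c_k} ≤ ∑ a_k`. Hence `U = v / C + log (2 / C)` satisfies
`e^U ≤ Δ U` on all of `ℂ`.

No such `U` exists: at a maximum point `z` of `U + 2 log (R² - |z|²)` in the disc of radius `R`,
`Δ` of this function is `≤ 0`, which gives `(R² - |z|²)² e^{U z} ≤ 2 R²`; comparing with the value
at `0` yields `R² e^{U 0} ≤ 2` for every `R`.
-/

open Real Filter Topology Finset

theorem IsLocalMax.deriv_deriv_nonpos {f : ℝ → ℝ} {a : ℝ} (h : IsLocalMax f a)
    (hf : ContinuousAt f a) : deriv (deriv f) a ≤ 0 := by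
  by_contra! hpos
  have hconst : f =ᶠ[𝓝 a] fun _ => f a := by
    filter_upwards [h, isLocalMin_of_deriv_deriv_pos hpos h.deriv_eq_zero hf] with x hmax hmin
    exact le_antisymm hmax hmin
  have hderiv : deriv f =ᶠ[𝓝 a] fun _ => 0 := by
    filter_upwards [hconst.deriv] with x hx
    rw [hx, deriv_const]
  rw [hderiv.deriv_eq, deriv_const] at hpos
  exact lt_irrefl _ hpos

section LineRestriction

variable {E F : Type*} [NormedAddCommGroup E] [NormedSpace ℝ E]
  [NormedAddCommGroup F] [NormedSpace ℝ F] {x : E}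

theorem ContDiffAt.iteratedFDeriv_two_apply_eq_deriv_deriv {f : E → F} (hf : ContDiffAt ℝ 2 f x)
    (v : E) : iteratedFDeriv ℝ 2 f x ![v, v] = deriv (deriv fun t : ℝ => f (x + t • v)) 0 := by
  have hline (t : ℝ) : HasDerivAt (fun s : ℝ => x + s • v) v t := by
    simpa using ((hasDerivAt_id t).smul_const v).const_add x
  have hderiv : deriv (fun t : ℝ => f (x + t • v)) =ᶠ[𝓝 0]
      fun t => fderiv ℝ f (x + t • v) v := by
    have hx : Tendsto (fun t : ℝ => x + t • v) (𝓝 0) (𝓝 x) := by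
      simpa using (hline 0).continuousAt.tendsto
    filter_upwards [hx.eventually (hf.eventually (by simp))] with t ht
    exact ((ht.differentiableAt (by simp)).hasFDerivAt.comp_hasDerivAt t (hline t)).deriv
  have hf' : DifferentiableAt ℝ (fderiv ℝ f) x :=
    (hf.fderiv_right (m := 1) le_rfl).differentiableAt one_ne_zero
  have h2 := (hf'.hasFDerivAt.comp_hasDerivAt_of_eq 0 (hline 0) (by simp)).clm_apply
    (hasDerivAt_const (0 : ℝ) v)
  rw [hderiv.deriv_eq, iteratedFDeriv_two_apply]
  simpa using h2.deriv.symm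

theorem IsLocalMax.iteratedFDeriv_two_apply_nonpos {f : E → ℝ} (h : IsLocalMax f x)
    (hf : ContDiffAt ℝ 2 f x) (v : E) : iteratedFDeriv ℝ 2 f x ![v, v] ≤ 0 := by
  have hline : Continuous fun t : ℝ => x + t • v := by fun_prop
  have hx : x + (0 : ℝ) • v = x := by simp
  rw [hf.iteratedFDeriv_two_apply_eq_deriv_deriv]
  refine IsLocalMax.deriv_deriv_nonpos ?_ ?_
  · exact IsLocalMax.comp_continuous (hx.symm ▸ h) hline.continuousAt
  · exact ContinuousAt.comp (g := f) (hx.symm ▸ hf.continuousAt) hline.continuousAt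

end LineRestriction

section Lap

variable {f g : ℂ → ℝ} {z : ℂ}

theorem IsLocalMax.lap_nonpos (h : IsLocalMax f z) (hf : ContDiffAt ℝ 2 f z) : lap f z ≤ 0 := by
  have h1 := h.iteratedFDeriv_two_apply_nonpos hf 1
  have hI := h.iteratedFDeriv_two_apply_nonpos hf Complex.I
  rw [lap]
  linarith

theorem ContDiffAt.lap_add (hf : ContDiffAt ℝ 2 f z) (hg : ContDiffAt ℝ 2 g z) :
    lap (fun w => f w + g w) z = lap f z + lap g z := by
  simp only [lap, ← Pi.add_def, iteratedFDeriv_add_apply hf hg, add_apply]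
  ring

theorem ContDiffAt.lap_const_mul (c : ℝ) (hf : ContDiffAt ℝ 2 f z) :
    lap (fun w => c * f w) z = c * lap f z := by
  simp only [lap, ← smul_eq_mul, iteratedFDeriv_const_smul_apply' hf, smul_apply]
  simp only [smul_eq_mul]
  ring

theorem ContDiffAt.lap_add_const (hf : ContDiffAt ℝ 2 f z) (c : ℝ) :
    lap (fun w => f w + c) z = lap f z := by
  rw [hf.lap_add contDiffAt_const]
  simp [lap, iteratedFDeriv_const_of_ne]

theorem lap_sum {ι : Type*} {s : Finset ι} {f : ι → ℂ → ℝ}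
    (hf : ∀ i ∈ s, ContDiffAt ℝ 2 (f i) z) :
    lap (fun w => ∑ i ∈ s, f i w) z = ∑ i ∈ s, lap (f i) z := by
  simp only [lap, iteratedFDeriv_fun_sum_apply hf, _root_.sum_apply,
    ← Finset.sum_add_distrib, Finset.mul_sum]

end Lap

theorem deriv_deriv_log_quadratic {D : ℝ} (hD : 0 < D) (b : ℝ) :
    deriv (deriv fun t => log (D - 2 * b * t - t ^ 2)) 0 = -(2 * D + 4 * b ^ 2) / D ^ 2 := by
  have hq (t : ℝ) : HasDerivAt (fun t => D - 2 * b * t - t ^ 2) (-2 * b - 2 * t) t :=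
    ((((hasDerivAt_id' t).const_mul (2 * b)).const_sub D).sub (hasDerivAt_pow 2 t)).congr_deriv
      (by ring)
  have hpos : ∀ᶠ t in 𝓝 (0 : ℝ), 0 < D - 2 * b * t - t ^ 2 :=
    (hq 0).continuousAt.eventually (lt_mem_nhds (by simpa using hD))
  have hderiv : deriv (fun t => log (D - 2 * b * t - t ^ 2)) =ᶠ[𝓝 0]
      fun t => (-2 * b - 2 * t) / (D - 2 * b * t - t ^ 2) := by
    filter_upwards [hpos] with t ht
    exact ((hq t).log ht.ne').deriv
  have hnum : HasDerivAt (fun t : ℝ => -2 * b - 2 * t) (-2) 0 :=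
    (((hasDerivAt_id' (0 : ℝ)).const_mul 2).const_sub (-2 * b)).congr_deriv (by ring)
  rw [hderiv.deriv_eq, (hnum.fun_div (hq 0) (by simpa using hD.ne')).deriv]
  field_simp [hD.ne']
  ring

theorem contDiffAt_log_sub_sq_norm {R : ℝ} {z : ℂ} (hz : ‖z‖ < R) :
    ContDiffAt ℝ 2 (fun w : ℂ => log (R ^ 2 - ‖w‖ ^ 2)) z :=
  (contDiffAt_const.sub (contDiff_norm_sq ℝ).contDiffAt).log (by nlinarith [norm_nonneg z])

theorem lap_log_sub_sq_norm {R : ℝ} {z : ℂ} (hz : ‖z‖ < R) :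
    lap (fun w => log (R ^ 2 - ‖w‖ ^ 2)) z = -(R ^ 2 / (R ^ 2 - ‖z‖ ^ 2) ^ 2) := by
  have hD : 0 < R ^ 2 - ‖z‖ ^ 2 := by nlinarith [norm_nonneg z]
  have hf := contDiffAt_log_sub_sq_norm hz
  have hre : (fun t : ℝ => log (R ^ 2 - ‖z + t • (1 : ℂ)‖ ^ 2)) =
      fun t => log ((R ^ 2 - ‖z‖ ^ 2) - 2 * z.re * t - t ^ 2) := by
    funext t
    simp only [Complex.sq_norm, Complex.normSq_apply, Complex.real_smul, mul_one, Complex.add_re,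
      Complex.ofReal_re, Complex.add_im, Complex.ofReal_im, add_zero]
    ring_nf
  have him : (fun t : ℝ => log (R ^ 2 - ‖z + t • Complex.I‖ ^ 2)) =
      fun t => log ((R ^ 2 - ‖z‖ ^ 2) - 2 * z.im * t - t ^ 2) := by
    funext t
    simp only [Complex.sq_norm, Complex.normSq_apply, Complex.real_smul, Complex.add_re,
      Complex.mul_re, Complex.ofReal_re, Complex.I_re, mul_zero, Complex.ofReal_im, Complex.I_im,
      mul_one, sub_self, add_zero, Complex.add_im, Complex.mul_im]
    ring_nf
  rw [lap, hf.iteratedFDeriv_two_apply_eq_deriv_deriv, hf.iteratedFDeriv_two_apply_eq_deriv_deriv,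
    hre, him, deriv_deriv_log_quadratic hD, deriv_deriv_log_quadratic hD]
  rw [Complex.sq_norm, Complex.normSq_apply] at hD ⊢
  field_simp
  ring

theorem exists_isLocalMax_add_two_log {u : ℂ → ℝ} (hu : Continuous u) {R : ℝ} (hR : 0 < R) :
    ∃ z, ‖z‖ < R ∧ IsLocalMax (fun w => u w + 2 * log (R ^ 2 - ‖w‖ ^ 2)) z ∧
      R ^ 4 * exp (u 0) ≤ (R ^ 2 - ‖z‖ ^ 2) ^ 2 * exp (u z) := by
  set h : ℂ → ℝ := fun w => (R ^ 2 - ‖w‖ ^ 2) ^ 2 * exp (u w) with h_def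
  have h0 : h 0 = R ^ 4 * exp (u 0) := by simp only [h_def, norm_zero]; ring
  have hcont : Continuous h := by fun_prop
  obtain ⟨z, hz, hmax⟩ := (isCompact_closedBall (0 : ℂ) R).exists_isMaxOn
    ⟨0, Metric.mem_closedBall_self hR.le⟩ hcont.continuousOn
  have hle : h 0 ≤ h z := hmax (Metric.mem_closedBall_self hR.le)
  have hzR : ‖z‖ < R := by
    refine (mem_closedBall_zero_iff.1 hz).lt_of_ne fun hzR => ?_
    have : h z = 0 := by simp [h_def, hzR]
    have : 0 < h 0 := by rw [h0]; positivity
    linarith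
  have hlog {w : ℂ} (hw : ‖w‖ < R) : u w + 2 * log (R ^ 2 - ‖w‖ ^ 2) = log (h w) := by
    have : 0 < R ^ 2 - ‖w‖ ^ 2 := by nlinarith [norm_nonneg w]
    rw [h_def, log_mul (by positivity) (exp_pos _).ne', log_exp, log_pow]
    push_cast
    ring
  refine ⟨z, hzR, ?_, h0 ▸ hle⟩
  filter_upwards [Metric.isOpen_ball.mem_nhds (mem_ball_zero_iff.2 hzR)] with w hw
  have hw' : ‖w‖ < R := mem_ball_zero_iff.1 hw
  have : 0 < R ^ 2 - ‖w‖ ^ 2 := by nlinarith [norm_nonneg w]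
  rw [hlog hw', hlog hzR]
  exact log_le_log (by positivity) (hmax (Metric.ball_subset_closedBall hw))

theorem sq_mul_exp_le_two_of_exp_le_lap {u : ℂ → ℝ} (hu : ContDiff ℝ 2 u)
    (h : ∀ z, exp (u z) ≤ lap u z) {R : ℝ} (hR : 0 < R) : R ^ 2 * exp (u 0) ≤ 2 := by
  obtain ⟨z, hz, hmax, h0⟩ := exists_isLocalMax_add_two_log hu.continuous hR
  have hD : 0 < R ^ 2 - ‖z‖ ^ 2 := by nlinarith [norm_nonneg z]
  have hweight : ContDiffAt ℝ 2 (fun w => 2 * log (R ^ 2 - ‖w‖ ^ 2)) z :=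
    contDiffAt_const.mul (contDiffAt_log_sub_sq_norm hz)
  have hlap : lap u z ≤ 2 * (R ^ 2 / (R ^ 2 - ‖z‖ ^ 2) ^ 2) := by
    have := hmax.lap_nonpos (hu.contDiffAt.add hweight)
    rw [hu.contDiffAt.lap_add hweight, (contDiffAt_log_sub_sq_norm hz).lap_const_mul,
      lap_log_sub_sq_norm hz] at this
    linarith
  have hz_le : (R ^ 2 - ‖z‖ ^ 2) ^ 2 * exp (u z) ≤ R ^ 2 * 2 :=
    calc (R ^ 2 - ‖z‖ ^ 2) ^ 2 * exp (u z)
        ≤ (R ^ 2 - ‖z‖ ^ 2) ^ 2 * (2 * (R ^ 2 / (R ^ 2 - ‖z‖ ^ 2) ^ 2)) := by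
          gcongr
          exact (h z).trans hlap
      _ = R ^ 2 * 2 := by field_simp
  refine le_of_mul_le_mul_left ?_ (by positivity : 0 < R ^ 2)
  linarith

theorem not_forall_exp_le_lap {u : ℂ → ℝ} (hu : ContDiff ℝ 2 u) :
    ¬ ∀ z, exp (u z) ≤ lap u z := fun h => by
  have := sq_mul_exp_le_two_of_exp_le_lap hu h (R := √(4 / exp (u 0))) (by positivity)
  rw [sq_sqrt (by positivity), div_mul_cancel₀ _ (exp_pos _).ne'] at this
  norm_num at this

theorem Finset.sum_range_mul_sub_succ {R : Type*} [CommRing R] (a b : ℕ → R) {n : ℕ}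
    (h0 : a 0 = 0) (hn : a n = 0) :
    ∑ j ∈ range n, b j * (a j - a (j + 1)) = ∑ j ∈ range n, (b (j + 1) - b j) * a (j + 1) := by
  have htel := Finset.sum_range_sub (fun j => b j * a j) n
  rw [h0, hn, mul_zero, mul_zero, sub_zero] at htel
  rw [← sub_eq_zero, ← Finset.sum_sub_distrib, ← neg_eq_zero, ← Finset.sum_neg_distrib, ← htel]
  exact Finset.sum_congr rfl fun j _ => by ring

section Toda

variable {r : ℕ} {w : ℕ → ℂ → ℝ}

noncomputable def todaExp (r : ℕ) (w : ℕ → ℂ → ℝ) (j : ℕ) (z : ℂ) : ℝ :=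
  if 0 < j ∧ j < r then exp (w (j + 1) z - w j z) else 0

theorem todaExp_nonneg (j : ℕ) (z : ℂ) : 0 ≤ todaExp r w j z := by
  unfold todaExp; split_ifs <;> positivity

theorem lap_eq_todaExp_sub (hr : 2 ≤ r)
    (hfirst : ∀ z, lap (w 1) z = -exp (-(w 1 z) + w 2 z))
    (hmid : ∀ i, 2 ≤ i → i ≤ r - 1 → ∀ z,
      lap (w i) z = exp (-(w (i - 1) z) + w i z) - exp (-(w i z) + w (i + 1) z))
    (hlast : ∀ z, lap (w r) z = exp (-(w (r - 1) z) + w r z)) {j : ℕ} (hj : j < r) (z : ℂ) :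
    lap (w (j + 1)) z = todaExp r w j z - todaExp r w (j + 1) z := by
  rcases j with _ | j
  · simp [todaExp, hfirst, show 1 < r by omega, neg_add_eq_sub]
  rcases (show j + 2 < r ∨ j + 2 = r by omega) with hj' | rfl
  · simp [todaExp, hmid (j + 2) le_add_self (by omega), hj', show j + 1 < r by omega,
      neg_add_eq_sub]
  · simp [todaExp, hlast, neg_add_eq_sub]

-- The sum runs over `range r`, so its `j`-th term is `(2 (j + 1) - r - 1) w_{j+1}`.
noncomputable def todaPotential (r : ℕ) (w : ℕ → ℂ → ℝ) : ℂ → ℝ :=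
  fun z => ∑ j ∈ range r, (2 * j + 1 - r : ℝ) * w (j + 1) z

theorem lap_todaPotential (hw : ∀ j < r, ContDiff ℝ 2 (w (j + 1)))
    (hlap : ∀ j < r, ∀ z, lap (w (j + 1)) z = todaExp r w j z - todaExp r w (j + 1) z) (z : ℂ) :
    lap (todaPotential r w) z = 2 * ∑ j ∈ range r, todaExp r w (j + 1) z := by
  have hterm (j : ℕ) (hj : j ∈ range r) :
      ContDiffAt ℝ 2 (fun z => (2 * j + 1 - r : ℝ) * w (j + 1) z) z :=
    contDiffAt_const.mul (hw j (mem_range.1 hj)).contDiffAt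
  unfold todaPotential
  rw [lap_sum hterm, Finset.sum_congr rfl fun j hj => by
      rw [(hw j (mem_range.1 hj)).contDiffAt.lap_const_mul, hlap j (mem_range.1 hj)],
    Finset.sum_range_mul_sub_succ (fun j => todaExp r w j z) _ (by simp [todaExp])
    (by simp [todaExp]), Finset.mul_sum]
  refine Finset.sum_congr rfl fun j _ => ?_
  push_cast
  ring

def todaWeight (r j : ℕ) : ℝ := (j + 1) * (r - (j + 1))

theorem todaPotential_eq_sum (hr : 0 < r) (z : ℂ) :
    todaPotential r w z = ∑ j ∈ range (r - 1), todaWeight r j * (w (j + 2) z - w (j + 1) z) := by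
  obtain ⟨n, rfl⟩ : ∃ n, r = n + 1 := ⟨r - 1, by omega⟩
  have := Finset.sum_range_mul_sub_succ (fun j : ℕ => (j * (n + 1 - j) : ℝ))
    (fun j => w (j + 1) z) (n := n + 1) (by simp) (by push_cast; ring)
  refine (Finset.sum_congr rfl fun j _ => by push_cast; ring).trans (this.trans ?_)
  rw [Finset.sum_range_succ, add_tsub_cancel_right]
  push_cast
  rw [sub_self, mul_zero, mul_zero, add_zero]
  exact Finset.sum_congr rfl fun j _ => by rw [todaWeight]; push_cast; ring

theorem todaWeight_pos {j : ℕ} (hj : j + 1 < r) : 0 < todaWeight r j := by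
  have : (j : ℝ) + 1 < r := by exact_mod_cast hj
  unfold todaWeight
  nlinarith

theorem sum_todaWeight_pos (hr : 2 ≤ r) : 0 < ∑ j ∈ range (r - 1), todaWeight r j :=
  sum_pos (fun j hj => todaWeight_pos (by have := mem_range.1 hj; omega))
    (nonempty_range_iff.2 (by omega))

theorem exp_todaPotential_div_le (hr : 2 ≤ r) (z : ℂ) :
    exp (todaPotential r w z / ∑ j ∈ range (r - 1), todaWeight r j) ≤
      ∑ j ∈ range r, todaExp r w (j + 1) z := by
  obtain ⟨i, hi, hle⟩ := convexOn_exp.exists_ge_of_centerMass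
    (fun j hj => (todaWeight_pos (by have := mem_range.1 hj; omega)).le) (sum_todaWeight_pos hr)
    (p := fun j => w (j + 2) z - w (j + 1) z) (fun _ _ => Set.mem_univ _)
  have hi' : i + 1 < r := by have := mem_range.1 hi; omega
  calc exp (todaPotential r w z / ∑ j ∈ range (r - 1), todaWeight r j)
      = exp ((range (r - 1)).centerMass (todaWeight r) fun j => w (j + 2) z - w (j + 1) z) := by
        rw [Finset.centerMass, todaPotential_eq_sum (by omega), div_eq_inv_mul, smul_eq_mul]
        rfl
    _ ≤ todaExp r w (i + 1) z := by simpa [todaExp, hi'] using hle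
    _ ≤ ∑ j ∈ range r, todaExp r w (j + 1) z :=
        single_le_sum (fun j _ => todaExp_nonneg (j + 1) z) (mem_range.2 (by omega))

end Toda

/-- for `Ω = ℂ`, `g₀ ≡ 1` and `q ≡ 0`, the Toda equation `Toda(0,g)`
has no solution. -/
theorem toda_no_solution_plane_zero_differential (r : ℕ) (hr : 2 ≤ r) :
    ¬ ∃ w : ℕ → ℂ → ℝ,
      (∀ i, 1 ≤ i → i ≤ r → ContDiff ℝ (⊤ : ℕ∞) (w i)) ∧
      (∀ z : ℂ, ∑ i ∈ Finset.Icc 1 r, w i z = 0) ∧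
      (∀ z : ℂ, lap (w 1) z = -Real.exp (-(w 1 z) + w 2 z)) ∧
      (∀ i, 2 ≤ i → i ≤ r - 1 → ∀ z : ℂ,
        lap (w i) z =
          Real.exp (-(w (i - 1) z) + w i z) - Real.exp (-(w i z) + w (i + 1) z)) ∧
      (∀ z : ℂ, lap (w r) z = Real.exp (-(w (r - 1) z) + w r z)) := by
  rintro ⟨w, hw, -, hfirst, hmid, hlast⟩
  have hsmooth (j : ℕ) (hj : j < r) : ContDiff ℝ 2 (w (j + 1)) :=
    (hw (j + 1) (by omega) hj).of_le (WithTop.coe_le_coe.2 le_top)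
  have hv : ContDiff ℝ 2 (todaPotential r w) :=
    ContDiff.sum fun j hj => contDiff_const.mul (hsmooth j (mem_range.1 hj))
  set C := ∑ j ∈ range (r - 1), todaWeight r j
  have hC : 0 < C := sum_todaWeight_pos hr
  refine not_forall_exp_le_lap (u := fun z => C⁻¹ * todaPotential r w z + log (2 / C))
    ((contDiff_const.mul hv).add contDiff_const) fun z => ?_
  calc exp (C⁻¹ * todaPotential r w z + log (2 / C))
      = 2 / C * exp (todaPotential r w z / C) := by
        rw [exp_add, exp_log (by positivity), inv_mul_eq_div]
        ring
    _ ≤ 2 / C * ∑ j ∈ range r, todaExp r w (j + 1) z := by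
        gcongr
        exact exp_todaPotential_div_le hr z
    _ = lap (fun z => C⁻¹ * todaPotential r w z + log (2 / C)) z := by
        rw [(contDiffAt_const.mul hv.contDiffAt).lap_add_const, hv.contDiffAt.lap_const_mul,
          lap_todaPotential hsmooth fun _ => lap_eq_todaExp_sub hr hfirst hmid hlast]
        ring
end

section
/- Let m ≥ 2 be an integer and let a, b, c > 0. Suppose d₁,…,d_m are positive real numbers satisfying: (1+a)d₁ − (a+2) + d₂⁻¹ = 0; −d_{k−1}d_k + 3d_k − 3 + d_{k+1}⁻¹ = 0 for every 2 ≤ k ≤ m−1; and −d_{m−1}d_m + (2+b)d_m − (1+c) = 0. Then: (1) if b = c, then d_k = 1 for all 1 ≤ k ≤ m; (2) if b = 1 and c = 2, then d_k = ((m−k+2)(ma+ka+2−a))/((m−k+1)(ma+ka+2)) for all 1 ≤ k ≤ m. In particular, in case (2) with r ≥ 4, n = ⌊r/2⌋, m = n−1 and a = 2n+2−r, one has d_{n−k} = ((k+1)(r−k−1))/(k(r−k)) for 1 ≤ k ≤ n−1. -/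
/-- auxiliary real identity for the third part -/
lemma toda_aux (nr kr rr : ℝ) (hk1 : 1 ≤ kr) (hk2 : kr ≤ nr - 1)
    (hn : 2 ≤ nr) (hr : 2 * nr ≤ rr)
    (hpar : (2 * nr - rr) * (2 * nr - rr + 1) = 0) :
    ((nr - 1) - (nr - kr) + 2) *
        ((nr - 1) * (2 * nr + 2 - rr) + (nr - kr) * (2 * nr + 2 - rr) + 2 - (2 * nr + 2 - rr)) /
      (((nr - 1) - (nr - kr) + 1) *
        ((nr - 1) * (2 * nr + 2 - rr) + (nr - kr) * (2 * nr + 2 - rr) + 2)) =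
    (kr + 1) * (rr - kr - 1) / (kr * (rr - kr)) := by
  have hrr : rr = 2 * nr ∨ rr = 2 * nr + 1 := by
    rcases mul_eq_zero.mp hpar with h | h
    · left; linarith
    · right; linarith
  rcases hrr with h | h <;> subst h
  · have p1 : (0:ℝ) < (nr - 1) - (nr - kr) + 1 := by linarith
    have p2 : (0:ℝ) < (nr - 1) * (2 * nr + 2 - 2 * nr) + (nr - kr) * (2 * nr + 2 - 2 * nr) + 2 := by
      nlinarith
    have p3 : (0:ℝ) < kr * (2 * nr - kr) := mul_pos (by linarith) (by linarith)
    rw [div_eq_div_iff (ne_of_gt (mul_pos p1 p2)) (ne_of_gt p3)]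
    ring
  · have p1 : (0:ℝ) < (nr - 1) - (nr - kr) + 1 := by linarith
    have p2 : (0:ℝ) < (nr - 1) * (2 * nr + 2 - (2 * nr + 1)) + (nr - kr) * (2 * nr + 2 - (2 * nr + 1)) + 2 := by
      nlinarith
    have p3 : (0:ℝ) < kr * (2 * nr + 1 - kr) := mul_pos (by linarith) (by linarith)
    rw [div_eq_div_iff (ne_of_gt (mul_pos p1 p2)) (ne_of_gt p3)]
    ring

set_option maxHeartbeats 1000000 in
/-- explicit values of the constants `d₁,…,d_m` solving the algebraic
system `(1+a)d₁ − (a+2) + d₂⁻¹ = 0`, `−d_{k−1}d_k + 3d_k − 3 + d_{k+1}⁻¹ = 0`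
(`2 ≤ k ≤ m−1`), `−d_{m−1}d_m + (2+b)d_m − (1+c) = 0`. -/
theorem toda_model_constants
    (m : ℕ) (hm : 2 ≤ m) (a b c : ℝ) (ha : 0 < a) (hb : 0 < b) (hc : 0 < c)
    (d : ℕ → ℝ) (hdpos : ∀ k, 1 ≤ k → k ≤ m → 0 < d k)
    (heq1 : (1 + a) * d 1 - (a + 2) + (d 2)⁻¹ = 0)
    (heqk : ∀ k, 2 ≤ k → k ≤ m - 1 →
      -(d (k - 1) * d k) + 3 * d k - 3 + (d (k + 1))⁻¹ = 0)
    (heqm : -(d (m - 1) * d m) + (2 + b) * d m - (1 + c) = 0) :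
    (b = c → ∀ k, 1 ≤ k → k ≤ m → d k = 1) ∧
    (b = 1 → c = 2 → ∀ k, 1 ≤ k → k ≤ m →
      d k = (((m : ℝ) - k + 2) * ((m : ℝ) * a + k * a + 2 - a))
          / (((m : ℝ) - k + 1) * ((m : ℝ) * a + k * a + 2))) ∧
    (∀ r n : ℕ, 4 ≤ r → n = r / 2 → m = n - 1 → a = 2 * (n : ℝ) + 2 - r →
      b = 1 → c = 2 →
      ∀ k, 1 ≤ k → k ≤ n - 1 →
        d (n - k) = (((k : ℝ) + 1) * ((r : ℝ) - k - 1)) / ((k : ℝ) * ((r : ℝ) - k))) := by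
  have hmR : (2:ℝ) ≤ (m:ℝ) := by exact_mod_cast hm
  set Q : ℕ → ℝ := fun k => ∏ i ∈ Finset.range k, (d (i+1))⁻¹ with hQdef
  have hQ0 : Q 0 = 1 := by simp [hQdef]
  have hQsucc : ∀ k, Q (k+1) = Q k * (d (k+1))⁻¹ := by
    intro k; simp [hQdef, Finset.prod_range_succ, mul_comm]
  have hQpos : ∀ k, k ≤ m → 0 < Q k := by
    intro k hk
    rw [hQdef]
    refine Finset.prod_pos fun i hi => inv_pos.mpr (hdpos (i+1) (by omega) ?_)
    simp only [Finset.mem_range] at hi; omega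
  have hdQ : ∀ k, 1 ≤ k → k ≤ m → d k * Q k = Q (k-1) := by
    intro k hk1 hkm
    obtain ⟨j, rfl⟩ : ∃ j, k = j + 1 := ⟨k - 1, by omega⟩
    have hdk : d (j+1) ≠ 0 := ne_of_gt (hdpos _ hk1 hkm)
    rw [hQsucc, Nat.add_sub_cancel, mul_comm (Q j), ← mul_assoc,
      mul_inv_cancel₀ hdk, one_mul]
  have hd1 : d 1 ≠ 0 := ne_of_gt (hdpos 1 le_rfl (by omega))
  have hd2 : d 2 ≠ 0 := ne_of_gt (hdpos 2 (by omega) hm)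
  have hQ1v : Q 1 = (d 1)⁻¹ := by simp [hQdef]
  have hQ2 : Q 2 = (a+2) * Q 1 - (1+a) := by
    have h2 : Q 2 = (d 1)⁻¹ * (d 2)⁻¹ := by
      simp [hQdef, Finset.prod_range_succ, mul_comm]
    have hinv : (d 2)⁻¹ = (a+2) - (1+a) * d 1 := by linarith
    rw [h2, hQ1v, hinv]
    field_simp
  have hQstep : ∀ j, j + 3 ≤ m → Q (j+3) = 3 * Q (j+2) - 3 * Q (j+1) + Q j := by
    intro j hj
    have e := heqk (j+2) (by omega) (by omega)
    rw [show j+2-1 = j+1 from by omega] at e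
    have h1 : d (j+2) * Q (j+2) = Q (j+1) := by
      have := hdQ (j+2) (by omega) (by omega)
      rwa [show j+2-1 = j+1 from by omega] at this
    have h2 : d (j+1) * Q (j+1) = Q j := by
      have := hdQ (j+1) (by omega) (by omega)
      rwa [show j+1-1 = j from by omega] at this
    have hinv : (d (j+3))⁻¹ = d (j+1) * d (j+2) - 3 * d (j+2) + 3 := by linarith
    rw [show j+3 = (j+2)+1 from rfl, hQsucc (j+2)]
    rw [show (j+2)+1 = j+3 from rfl, hinv]
    linear_combination d (j+1) * h1 - 3 * h1 + h2
  have hformula : ∀ k, k ≤ m → Q k = 1 + ((k:ℝ) + a*(k:ℝ)*((k:ℝ)-1)/2) * (Q 1 - 1) := by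
    intro k
    induction k using Nat.strong_induction_on with
    | _ k ih =>
      intro hk
      rcases Nat.lt_or_ge k 3 with h3 | h3
      · interval_cases k
        · rw [hQ0]; push_cast; ring
        · push_cast; ring
        · rw [hQ2]; push_cast; ring
      · obtain ⟨j, rfl⟩ : ∃ j, k = j + 3 := ⟨k - 3, by omega⟩
        rw [hQstep j hk, ih j (by omega) (by omega), ih (j+1) (by omega) (by omega),
            ih (j+2) (by omega) (by omega)]
        push_cast; ring
  have hdm : d m * Q m = Q (m-1) := hdQ m (by omega) le_rfl
  have hdm1 : d (m-1) * Q (m-1) = Q (m-2) := by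
    have := hdQ (m-1) (by omega) (by omega)
    rwa [show m-1-1 = m-2 from by omega] at this
  have hlast' : -(Q (m-2)) + (2+b) * Q (m-1) - (1+c) * Q m = 0 := by
    linear_combination Q m * heqm + d (m-1) * hdm - (2+b) * hdm + hdm1
  have hcm1 : ((m-1:ℕ):ℝ) = (m:ℝ) - 1 := by
    rw [Nat.cast_sub (by omega)]; norm_num
  have hcm2 : ((m-2:ℕ):ℝ) = (m:ℝ) - 2 := by
    rw [Nat.cast_sub (by omega)]; norm_num
  have hQmv := hformula m le_rfl
  have hQm1v : Q (m-1) = 1 + (((m:ℝ)-1) + a*((m:ℝ)-1)*(((m:ℝ)-1)-1)/2) * (Q 1 - 1) := by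
    have := hformula (m-1) (by omega); rwa [hcm1] at this
  have hQm2v : Q (m-2) = 1 + (((m:ℝ)-2) + a*((m:ℝ)-2)*(((m:ℝ)-2)-1)/2) * (Q 1 - 1) := by
    have := hformula (m-2) (by omega); rwa [hcm2] at this
  rw [hQmv, hQm1v, hQm2v] at hlast'
  have part1 : b = c → ∀ k, 1 ≤ k → k ≤ m → d k = 1 := by
    intro hbc k hk1 hkm
    rw [← hbc] at hlast'
    have hC : (Q 1 - 1) * (a + b * (1 + a * ((m:ℝ) - 1))) = 0 := by
      linear_combination -hlast'
    have hpos1 : (0:ℝ) < 1 + a * ((m:ℝ) - 1) := by nlinarith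
    have hCpos : 0 < a + b * (1 + a * ((m:ℝ) - 1)) := by nlinarith [mul_pos hb hpos1]
    have hs : Q 1 - 1 = 0 := by
      rcases mul_eq_zero.mp hC with h | h
      · exact h
      · exact absurd h (ne_of_gt hCpos)
    have hQk : Q k = 1 := by rw [hformula k hkm, hs]; ring
    have hQk1 : Q (k-1) = 1 := by rw [hformula (k-1) (by omega), hs]; ring
    have hdq := hdQ k hk1 hkm
    rw [hQk, hQk1, mul_one] at hdq
    exact hdq
  have part2 : b = 1 → c = 2 → ∀ k, 1 ≤ k → k ≤ m →
      d k = (((m : ℝ) - k + 2) * ((m : ℝ) * a + k * a + 2 - a))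
          / (((m : ℝ) - k + 1) * ((m : ℝ) * a + k * a + 2)) := by
    intro hb1 hc2 k hk1 hkm
    rw [hb1, hc2] at hlast'
    have hD : (Q 1 - 1) * (a + (m:ℝ) + 1 + a * ((m:ℝ)-1) * ((m:ℝ)+2)/2) = -1 := by
      linear_combination -hlast'
    have hkmR : (k:ℝ) ≤ (m:ℝ) := by exact_mod_cast hkm
    have hk1R : (1:ℝ) ≤ (k:ℝ) := by exact_mod_cast hk1
    have hck1 : ((k-1:ℕ):ℝ) = (k:ℝ) - 1 := by
      rw [Nat.cast_sub hk1]; norm_num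
    have hQkv := hformula k hkm
    have hQk1v : Q (k-1) = 1 + (((k:ℝ)-1) + a*((k:ℝ)-1)*(((k:ℝ)-1)-1)/2) * (Q 1 - 1) := by
      have := hformula (k-1) (by omega); rwa [hck1] at this
    have hQkE : Q k * (a + (m:ℝ) + 1 + a * ((m:ℝ)-1) * ((m:ℝ)+2)/2)
        = (a + (m:ℝ) + 1 + a * ((m:ℝ)-1) * ((m:ℝ)+2)/2) - ((k:ℝ) + a*(k:ℝ)*((k:ℝ)-1)/2) := by
      linear_combination (a + (m:ℝ) + 1 + a * ((m:ℝ)-1) * ((m:ℝ)+2)/2) * hQkv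
        + ((k:ℝ) + a*(k:ℝ)*((k:ℝ)-1)/2) * hD
    have hQk1E : Q (k-1) * (a + (m:ℝ) + 1 + a * ((m:ℝ)-1) * ((m:ℝ)+2)/2)
        = (a + (m:ℝ) + 1 + a * ((m:ℝ)-1) * ((m:ℝ)+2)/2)
          - (((k:ℝ)-1) + a*((k:ℝ)-1)*(((k:ℝ)-1)-1)/2) := by
      linear_combination (a + (m:ℝ) + 1 + a * ((m:ℝ)-1) * ((m:ℝ)+2)/2) * hQk1v
        + (((k:ℝ)-1) + a*((k:ℝ)-1)*(((k:ℝ)-1)-1)/2) * hD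
    have hden2 : ((m:ℝ) - k + 1) * ((m:ℝ)*a + k*a + 2) ≠ 0 := by
      have h1 : (0:ℝ) < (m:ℝ) - k + 1 := by linarith
      have h2 : (0:ℝ) < (m:ℝ)*a + k*a + 2 := by nlinarith
      exact ne_of_gt (mul_pos h1 h2)
    have hdq := hdQ k hk1 hkm
    rw [eq_div_iff hden2]
    linear_combination (-2 * d k) * hQkE + 2 * hQk1E
      + (2*(a + (m:ℝ) + 1 + a*((m:ℝ)-1)*((m:ℝ)+2)/2)) * hdq
  refine ⟨part1, part2, ?_⟩
  intro r n hr hn hmn hav hb1 hc2 k hk1 hkn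
  have hn2 : 2 ≤ n := by omega
  have h2 := part2 hb1 hc2 (n-k) (by omega) (by omega)
  rw [h2]
  have hknat : k ≤ n := by omega
  have hcnk : ((n-k:ℕ):ℝ) = (n:ℝ) - k := by rw [Nat.cast_sub hknat]
  have hcm : ((m:ℕ):ℝ) = (n:ℝ) - 1 := by
    rw [hmn, Nat.cast_sub (by omega)]; norm_num
  rw [hcnk, hcm, hav]
  have hk1R : (1:ℝ) ≤ (k:ℝ) := by exact_mod_cast hk1
  have hknR : (k:ℝ) ≤ (n:ℝ) - 1 := by
    have h : k + 1 ≤ n := by omega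
    have : (k:ℝ) + 1 ≤ (n:ℝ) := by exact_mod_cast h
    linarith
  have hnR : (2:ℝ) ≤ (n:ℝ) := by exact_mod_cast hn2
  have hrnR : 2 * (n:ℝ) ≤ (r:ℝ) := by
    have h : 2 * n ≤ r := by omega
    exact_mod_cast h
  have hpar : (2 * (n:ℝ) - (r:ℝ)) * (2 * (n:ℝ) - (r:ℝ) + 1) = 0 := by
    have h : r = 2*n ∨ r = 2*n+1 := by omega
    rcases h with h | h <;> rw [h] <;> push_cast <;> ring
  exact toda_aux (n:ℝ) (k:ℝ) (r:ℝ) hk1R hknR hnR hrnR hpar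
end

section
/- Let r ≥ 2 be an integer. For a tuple a = (a₁,…,a_r) of positive real numbers with ∏ᵢ₌₁^r aᵢ = 1, set F(a) := Σ_{i=1}^{r−1}(a_{i+1}−aᵢ)² + (a₁−a_r)² and G(a) := Σ_{i=1}^r aᵢ. For every 0 < ε < 1 there exists δ > 0, depending only on ε and r, such that whenever aᵢ < ε for some index i, one has F(a) > δ·G(a)². -/
/-!
Let `M = a_j` be the largest entry. Since the entries multiply to `1`, `M ≥ 1`, so an entry
`a_i < ε` lies at distance more than `M - ε ≥ (1 - ε) M ≥ (1 - ε) G(a) / r` below `M`.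
Telescoping from `i` to `j` and Cauchy–Schwarz bound `(a_j - a_i)²` by `r` times the sum of the
squared consecutive differences, whence `F(a) > (1 - ε)² G(a)² / r³`.
-/

open Finset

lemma sq_sub_le_mul_sum_sq_sub (a : ℕ → ℝ) {i j : ℕ} (hij : i ≤ j) :
    (a j - a i) ^ 2 ≤ ((j - i : ℕ) : ℝ) * ∑ m ∈ Ico i j, (a (m + 1) - a m) ^ 2 := by
  rw [← sum_Ico_sub a hij]
  simpa using sq_sum_le_card_mul_sum_sq (s := Ico i j) (f := fun m => a (m + 1) - a m)

lemma sq_sub_le_mul_sum_sq_consecutive_sub (a : ℕ → ℝ) {r i j : ℕ}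
    (hi : i ∈ Icc 1 r) (hj : j ∈ Icc 1 r) :
    (a j - a i) ^ 2 ≤ r * ∑ k ∈ Icc 1 (r - 1), (a (k + 1) - a k) ^ 2 := by
  wlog hij : i ≤ j generalizing i j
  · rw [← neg_sub, neg_sq]
    exact this hj hi (by omega)
  rw [mem_Icc] at hi hj
  calc (a j - a i) ^ 2 ≤ ((j - i : ℕ) : ℝ) * ∑ m ∈ Ico i j, (a (m + 1) - a m) ^ 2 :=
        sq_sub_le_mul_sum_sq_sub a hij
    _ ≤ r * ∑ k ∈ Icc 1 (r - 1), (a (k + 1) - a k) ^ 2 := by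
        refine mul_le_mul (by exact_mod_cast (by omega : j - i ≤ r))
          (sum_le_sum_of_subset_of_nonneg ?_ fun _ _ _ => sq_nonneg _)
          (sum_nonneg fun _ _ => sq_nonneg _) (Nat.cast_nonneg r)
        intro m hm
        simp only [mem_Ico, mem_Icc] at hm ⊢
        omega

lemma exists_one_le_of_prod_eq_one {ι R : Type*} [CommSemiring R] [LinearOrder R]
    [IsStrictOrderedRing R] {s : Finset ι} {f : ι → R} (hf : ∀ i ∈ s, 0 < f i)
    (hs : s.Nonempty) (hprod : ∏ i ∈ s, f i = 1) : ∃ i ∈ s, 1 ≤ f i := by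
  by_contra! hlt
  have := prod_lt_prod_of_nonempty hf hlt hs
  simp [hprod] at this

/-- for tuples `a = (a₁,…,a_r)` of positive reals with product `1`,
setting `F(a) = Σ_{i=1}^{r−1}(a_{i+1}−aᵢ)² + (a₁−a_r)²` and `G(a) = Σᵢ aᵢ`, for
every `0 < ε < 1` there is `δ > 0`, depending only on `ε` and `r`, such that if some
`aᵢ < ε` then `F(a) > δ·G(a)²`. -/
theorem toda_linear_algebra_gap_estimate
    (r : ℕ) (hr : 2 ≤ r) (ε : ℝ) (hε0 : 0 < ε) (hε1 : ε < 1) :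
    ∃ δ : ℝ, 0 < δ ∧
      ∀ a : ℕ → ℝ, (∀ i, 1 ≤ i → i ≤ r → 0 < a i) →
        (∏ i ∈ Finset.Icc 1 r, a i = 1) →
        (∃ i, 1 ≤ i ∧ i ≤ r ∧ a i < ε) →
        δ * (∑ i ∈ Finset.Icc 1 r, a i) ^ 2
          < (∑ i ∈ Finset.Icc 1 (r - 1), (a (i + 1) - a i) ^ 2) + (a 1 - a r) ^ 2 := by
  have hr0 : (0 : ℝ) < r := by exact_mod_cast (by omega : 0 < r)
  have hε : 0 < 1 - ε := sub_pos.2 hε1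
  refine ⟨(1 - ε) ^ 2 / r ^ 3, by positivity, ?_⟩
  rintro a hpos hprod ⟨i, hi1, hir, hai⟩
  set S := ∑ i ∈ Icc 1 r, a i
  set F := ∑ i ∈ Icc 1 (r - 1), (a (i + 1) - a i) ^ 2
  have hne : (Icc 1 r).Nonempty := nonempty_Icc.2 (by omega)
  have hpos' : ∀ k ∈ Icc 1 r, 0 < a k := fun k hk => hpos k (mem_Icc.1 hk).1 (mem_Icc.1 hk).2
  obtain ⟨j, hj, hmax⟩ := exists_max_image (Icc 1 r) a hne
  obtain ⟨k, hk, hak⟩ := exists_one_le_of_prod_eq_one hpos' hne hprod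
  have hM : 1 ≤ a j := hak.trans (hmax k hk)
  have hS : S ≤ r * a j := by simpa using sum_le_card_nsmul _ _ _ hmax
  have hS0 : 0 ≤ S := sum_nonneg fun k hk => (hpos' k hk).le
  have hgap : (1 - ε) * S < r * (a j - a i) :=
    calc (1 - ε) * S ≤ (1 - ε) * (r * a j) := mul_le_mul_of_nonneg_left hS hε.le
      _ = r * (a j - ε * a j) := by ring
      _ ≤ r * (a j - ε) := by gcongr; exact le_mul_of_one_le_right hε0.le hM
      _ < r * (a j - a i) := by gcongr
  have hkey : ((1 - ε) * S) ^ 2 < r ^ 3 * F :=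
    calc ((1 - ε) * S) ^ 2 < (r * (a j - a i)) ^ 2 := by gcongr
      _ = r ^ 2 * (a j - a i) ^ 2 := by ring
      _ ≤ r ^ 2 * (r * F) := by
        gcongr
        exact sq_sub_le_mul_sum_sq_consecutive_sub a (mem_Icc.2 ⟨hi1, hir⟩) hj
      _ = r ^ 3 * F := by ring
  calc (1 - ε) ^ 2 / r ^ 3 * S ^ 2 = ((1 - ε) * S) ^ 2 / r ^ 3 := by ring
    _ < F := by rw [div_lt_iff₀ (by positivity)]; linarith
    _ ≤ F + (a 1 - a r) ^ 2 := le_add_of_nonneg_right (sq_nonneg _)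
end

section
/- Let r ≥ 2 be an integer. There exist positive constants C₁,…,C_r, depending only on r, such that for every r×r complex matrix A and every 1 ≤ k ≤ r: Σ_{i=1}^{k} Σ_{j=i+1}^{r} |A_{j,i}|² ≤ C_k · Σ_{i=1}^{k} | Σ_{j=1}^{i−1} |A_{i,j}|² − Σ_{j=i+1}^{r} |A_{j,i}|² |. -/
open Finset

/-!
Write `L i = ∑_{j>i} |A_{j,i}|²` for the mass of column `i` below the diagonal and
`U i = ∑_{j<i} |A_{i,j}|²` for the mass of row `i` left of the diagonal. Every entry
`A_{i,j}` with `j < i` lies below the diagonal in column `j`, so `U i ≤ ∑_{j<i} L j`,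
while `L i ≤ U i + |U i - L i|`. Hence the partial sums `S_n = ∑_{i<n} L i` satisfy
`S_{n+1} ≤ 2 S_n + |U_n - L_n|`, which unrolls to the constant `C_k = 2^(k+1) - 1`.
-/

theorem Finset.sum_le_two_pow_card_sub_one_mul_sum {ι : Type*} [LinearOrder ι]
    (s : Finset ι) (L D : ι → ℝ) (hD : ∀ i ∈ s, 0 ≤ D i)
    (hL : ∀ i ∈ s, L i ≤ ∑ j ∈ s with j < i, L j + D i) :
    ∑ i ∈ s, L i ≤ (2 ^ #s - 1) * ∑ i ∈ s, D i := by
  induction s using Finset.induction_on_max with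
  | empty => simp
  | insert a s ha ih =>
    have has : a ∉ s := fun h => lt_irrefl a (ha a h)
    have hS : ∑ i ∈ s, L i ≤ (2 ^ #s - 1) * ∑ i ∈ s, D i := by
      refine ih (fun i hi => hD i (mem_insert_of_mem hi)) fun i hi => ?_
      have hfilter : {j ∈ insert a s | j < i} = {j ∈ s | j < i} := by
        rw [filter_insert, if_neg (ha i hi).not_gt]
      simpa [hfilter] using hL i (mem_insert_of_mem hi)
    have hLa : L a ≤ ∑ i ∈ s, L i + D a := by
      have hfilter : {j ∈ insert a s | j < a} = s := by
        rw [filter_insert, if_neg (lt_irrefl a), filter_true_of_mem ha]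
      simpa [hfilter] using hL a (mem_insert_self a s)
    have hDa : 0 ≤ D a := hD a (mem_insert_self a s)
    have hT : 0 ≤ ∑ i ∈ s, D i := sum_nonneg fun i hi => hD i (mem_insert_of_mem hi)
    have hpow : (1 : ℝ) ≤ 2 ^ #s := one_le_pow₀ one_le_two
    rw [sum_insert has, sum_insert has, card_insert_of_notMem has, pow_succ]
    nlinarith

theorem Matrix.sum_norm_sq_lt_le_sum_sum_norm_sq_lt {ι α : Type*} [Fintype ι] [LinearOrder ι]
    [Norm α] (A : Matrix ι ι α) (i : ι) :
    ∑ j with j < i, ‖A i j‖ ^ 2 ≤ ∑ j with j < i, ∑ l with j < l, ‖A l j‖ ^ 2 :=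
  sum_le_sum fun j hj =>
    single_le_sum (f := fun l => ‖A l j‖ ^ 2) (fun _ _ => sq_nonneg _)
      (mem_filter.2 ⟨mem_univ i, (mem_filter.1 hj).2⟩)

theorem matrix_lower_entries_commutator_estimate_general (r : ℕ) :
    ∃ C : Fin r → ℝ, (∀ k, 0 < C k) ∧
      ∀ A : Matrix (Fin r) (Fin r) ℂ, ∀ k : Fin r,
        ∑ i ∈ univ.filter (fun i : Fin r => i ≤ k),
          ∑ j ∈ univ.filter (fun j : Fin r => i < j), ‖A j i‖ ^ 2
        ≤ C k *
          ∑ i ∈ univ.filter (fun i : Fin r => i ≤ k),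
            |(∑ j ∈ univ.filter (fun j : Fin r => j < i), ‖A i j‖ ^ 2)
              - ∑ j ∈ univ.filter (fun j : Fin r => i < j), ‖A j i‖ ^ 2| := by
  refine ⟨fun k => 2 ^ (k.val + 1) - 1,
    fun k => sub_pos.2 (one_lt_pow₀ one_lt_two k.val.succ_ne_zero), fun A k => ?_⟩
  have hcard : #(univ.filter fun i : Fin r => i ≤ k) = k.val + 1 := by
    rw [filter_ge_eq_Iic, Fin.card_Iic]
  show _ ≤ (2 ^ (k.val + 1) - 1) * _
  rw [← hcard]
  refine sum_le_two_pow_card_sub_one_mul_sum _ _ _ (fun _ _ => abs_nonneg _) fun i hi => ?_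
  have hlt : {j ∈ univ.filter (· ≤ k) | j < i} = univ.filter (· < i) := by
    ext j
    simp only [mem_filter, mem_univ, true_and, and_iff_right_iff_imp]
    exact fun hj => hj.le.trans (mem_filter.1 hi).2
  rw [hlt]
  have hrow := A.sum_norm_sq_lt_le_sum_sum_norm_sq_lt i
  have hcol := neg_abs_le (∑ j with j < i, ‖A i j‖ ^ 2 - ∑ j with i < j, ‖A j i‖ ^ 2)
  linarith

/-- there exist positive constants `C₁,…,C_r`, depending only on `r`,
such that for every `r×r` complex matrix `A` and every `k`,
`Σ_{i≤k} Σ_{j>i} |A_{j,i}|² ≤ C_k · Σ_{i≤k} |Σ_{j<i}|A_{i,j}|² − Σ_{j>i}|A_{j,i}|²|`. -/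
theorem matrix_lower_entries_commutator_estimate (r : ℕ) (hr : 2 ≤ r) :
    ∃ C : Fin r → ℝ, (∀ k, 0 < C k) ∧
      ∀ A : Matrix (Fin r) (Fin r) ℂ, ∀ k : Fin r,
        ∑ i ∈ univ.filter (fun i : Fin r => i ≤ k),
          ∑ j ∈ univ.filter (fun j : Fin r => i < j), ‖A j i‖ ^ 2
        ≤ C k *
          ∑ i ∈ univ.filter (fun i : Fin r => i ≤ k),
            |(∑ j ∈ univ.filter (fun j : Fin r => j < i), ‖A i j‖ ^ 2)
              - ∑ j ∈ univ.filter (fun j : Fin r => i < j), ‖A j i‖ ^ 2| :=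
  matrix_lower_entries_commutator_estimate_general r
end

section
/- Let r ≥ 2 be an integer. There exists a constant C₀ > 0, depending only on r, such that for every lower-triangular r×r complex matrix A (i.e. A_{i,j} = 0 whenever i < j), writing A₁ for the strictly lower-triangular part of A (the matrix obtained from A by replacing its diagonal entries by 0), one has ‖[A,Aᴴ]‖ ≥ C₀·‖A₁‖². -/
/-- The Frobenius (Hilbert–Schmidt) norm of a complex matrix. -/
noncomputable def frobNorm {r : ℕ} (A : Matrix (Fin r) (Fin r) ℂ) : ℝ :=
  Real.sqrt (∑ i, ∑ j, ‖A i j‖ ^ 2)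

/-!
The `i`-th diagonal entry of `[A, Aᴴ]` is the squared mass of row `i` of `A` minus that of
column `i`. Weighting these differences by the index `i` gives
`∑ᵢ i·([A, Aᴴ])ᵢᵢ = ∑_{i,j} (i - j)|Aᵢⱼ|²`, and for lower-triangular `A` every term with `j < i`
has weight at least `1` while the others vanish. Since each diagonal entry is bounded by
`‖[A, Aᴴ]‖`, this gives `‖A₁‖² ≤ r²‖[A, Aᴴ]‖`.
-/

open Finset
open scoped Matrix

theorem Matrix.commutator_conjTranspose_apply_self {n 𝕜 : Type*} [Fintype n] [RCLike 𝕜]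
    (A : Matrix n n 𝕜) (i : n) :
    (A * Aᴴ - Aᴴ * A) i i = ((∑ j, ‖A i j‖ ^ 2 - ∑ j, ‖A j i‖ ^ 2 : ℝ) : 𝕜) := by
  simp only [Matrix.sub_apply, Matrix.mul_apply, Matrix.conjTranspose_apply, RCLike.star_def,
    RCLike.mul_conj, RCLike.conj_mul]
  push_cast
  rfl

theorem sum_sub_mul_eq_sum_mul_rowSum_sub_colSum {ι : Type*} [Fintype ι] (w : ι → ℝ)
    (a : ι → ι → ℝ) :
    ∑ i, ∑ j, (w i - w j) * a i j = ∑ i, w i * (∑ j, a i j - ∑ j, a j i) := by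
  simp only [sub_mul, mul_sub, sum_sub_distrib, mul_sum]
  rw [sum_comm (f := fun i j => w j * a i j)]

theorem sum_strictLower_le_mul_sum_abs_rowSum_sub_colSum {n : ℕ} (a : Fin n → Fin n → ℝ)
    (ha : ∀ i j, 0 ≤ a i j) (hlower : ∀ i j, i < j → a i j = 0) :
    ∑ i, ∑ j, (if j < i then a i j else 0)
      ≤ n * ∑ i, |∑ j, a i j - ∑ j, a j i| := by
  have hterm : ∀ i j : Fin n,
      (if j < i then a i j else 0) ≤ (((i : ℕ) : ℝ) - (j : ℕ)) * a i j := by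
    intro i j
    rcases lt_trichotomy j i with h | rfl | h
    · have hgap : (1 : ℝ) ≤ ((i : ℕ) : ℝ) - (j : ℕ) := by
        have : ((j : ℕ) : ℝ) + 1 ≤ (i : ℕ) := by exact_mod_cast h
        linarith
      simpa [h] using le_mul_of_one_le_left (ha i j) hgap
    · simp
    · simp [not_lt.2 h.le, hlower i j h]
  calc ∑ i, ∑ j, (if j < i then a i j else 0)
      ≤ ∑ i : Fin n, ∑ j : Fin n, (((i : ℕ) : ℝ) - (j : ℕ)) * a i j :=
        sum_le_sum fun i _ => sum_le_sum fun j _ => hterm i j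
    _ = ∑ i : Fin n, ((i : ℕ) : ℝ) * (∑ j, a i j - ∑ j, a j i) :=
      sum_sub_mul_eq_sum_mul_rowSum_sub_colSum (fun i : Fin n => ((i : ℕ) : ℝ)) a
    _ ≤ ∑ i, (n : ℝ) * |∑ j, a i j - ∑ j, a j i| := by
      refine sum_le_sum fun i _ => (le_abs_self _).trans ?_
      rw [abs_mul, Nat.abs_cast]
      gcongr
      exact_mod_cast i.is_lt.le
    _ = n * ∑ i, |∑ j, a i j - ∑ j, a j i| := (mul_sum ..).symm

theorem frobNorm_sq {r : ℕ} (A : Matrix (Fin r) (Fin r) ℂ) :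
    frobNorm A ^ 2 = ∑ i, ∑ j, ‖A i j‖ ^ 2 :=
  Real.sq_sqrt (by positivity)

theorem norm_apply_le_frobNorm {r : ℕ} (A : Matrix (Fin r) (Fin r) ℂ) (i j : Fin r) :
    ‖A i j‖ ≤ frobNorm A := by
  refine Real.le_sqrt_of_sq_le ?_
  calc ‖A i j‖ ^ 2 ≤ ∑ q, ‖A i q‖ ^ 2 :=
        single_le_sum (f := fun q => ‖A i q‖ ^ 2) (fun _ _ => by positivity) (mem_univ j)
    _ ≤ ∑ p, ∑ q, ‖A p q‖ ^ 2 :=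
        single_le_sum (f := fun p => ∑ q, ‖A p q‖ ^ 2) (fun _ _ => by positivity) (mem_univ i)

theorem frobNorm_offDiag_sq_le_of_lowerTriangular {r : ℕ} (A : Matrix (Fin r) (Fin r) ℂ)
    (hA : ∀ i j : Fin r, i < j → A i j = 0) :
    frobNorm (fun i j => if i = j then 0 else A i j) ^ 2
      ≤ r ^ 2 * frobNorm (A * Aᴴ - Aᴴ * A) := by
  have hoff : frobNorm (fun i j => if i = j then 0 else A i j) ^ 2
      = ∑ i, ∑ j, (if j < i then ‖A i j‖ ^ 2 else 0) := by
    rw [frobNorm_sq (fun i j => if i = j then 0 else A i j)]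
    refine sum_congr rfl fun i _ => sum_congr rfl fun j _ => ?_
    rcases lt_trichotomy i j with h | rfl | h
    · simp [h.ne, not_lt.2 h.le, hA i j h]
    · simp
    · simp [h.ne', h]
  have hdiag : ∀ i,
      |∑ j, ‖A i j‖ ^ 2 - ∑ j, ‖A j i‖ ^ 2| ≤ frobNorm (A * Aᴴ - Aᴴ * A) := fun i => by
    have := norm_apply_le_frobNorm (A * Aᴴ - Aᴴ * A) i i
    rwa [Matrix.commutator_conjTranspose_apply_self, RCLike.norm_ofReal] at this
  calc frobNorm (fun i j => if i = j then 0 else A i j) ^ 2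
      ≤ r * ∑ i, |∑ j, ‖A i j‖ ^ 2 - ∑ j, ‖A j i‖ ^ 2| :=
        hoff ▸ sum_strictLower_le_mul_sum_abs_rowSum_sub_colSum _ (fun _ _ => by positivity)
          fun i j h => by simp [hA i j h]
    _ ≤ r * ∑ _i : Fin r, frobNorm (A * Aᴴ - Aᴴ * A) := by gcongr with i; exact hdiag i
    _ = r ^ 2 * frobNorm (A * Aᴴ - Aᴴ * A) := by
      rw [sum_const, card_univ, Fintype.card_fin, nsmul_eq_mul]; ring

/-- there is `C₀ > 0`, depending only on `r`, such that for every
lower-triangular `r×r` complex matrix `A`, with `A₁` its strictly lower-triangular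
part, one has `‖[A,Aᴴ]‖ ≥ C₀·‖A₁‖²`. -/
theorem lower_triangular_commutator_lower_bound (r : ℕ) (hr : 2 ≤ r) :
    ∃ C₀ : ℝ, 0 < C₀ ∧
      ∀ A : Matrix (Fin r) (Fin r) ℂ, (∀ i j : Fin r, i < j → A i j = 0) →
        C₀ * frobNorm (fun i j => if i = j then 0 else A i j) ^ 2
          ≤ frobNorm (A * A.conjTranspose - A.conjTranspose * A) := by
  have hr_sq : (0 : ℝ) < r ^ 2 := by
    have : 0 < r := by omega
    positivity
  refine ⟨(r ^ 2)⁻¹, inv_pos.2 hr_sq, fun A hA => ?_⟩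
  rw [inv_mul_le_iff₀ hr_sq]
  exact frobNorm_offDiag_sq_le_of_lowerTriangular A hA
end

section
/- Let r ≥ 2 be an integer. There exists a constant C > 0, depending only on r, such that for every r×r complex matrix A and every real B > 0: if every eigenvalue α of A satisfies |α| < B, and ‖A‖² ≥ 2rB², then ‖[A,Aᴴ]‖ ≥ C·‖A‖². -/
theorem spectrum.norm_le_of_mem_smul {𝕜 A : Type*} [NormedField 𝕜] [Ring A] [Algebra 𝕜 A]
    {a : A} {c : ℝ} (ha : ∀ α ∈ spectrum 𝕜 a, ‖α‖ ≤ c) {s : 𝕜} (hs : s ≠ 0) {α : 𝕜}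
    (hα : α ∈ spectrum 𝕜 (s • a)) : ‖α‖ ≤ ‖s‖ * c := by
  rw [show s = (Units.mk0 s hs : 𝕜) from rfl, ← Units.smul_def, spectrum.unit_smul_eq_smul] at hα
  obtain ⟨β, hβ, rfl⟩ := hα
  simp only [Units.val_mk0, smul_eq_mul, norm_mul]
  gcongr
  exact ha β hβ

namespace Matrix

section Charpoly

open Polynomial

variable {n : Type*} [Fintype n] [DecidableEq n]

theorem pow_card_le_norm_eval_charpoly {A : Matrix n n ℂ} {c : ℝ}
    (hA : ∀ α ∈ spectrum ℂ A, ‖α‖ ≤ c) {z : ℂ} (hz : c ≤ ‖z‖) :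
    (‖z‖ - c) ^ Fintype.card n ≤ ‖A.charpoly.eval z‖ := by
  have hsplit := IsAlgClosed.splits A.charpoly
  have hroots : Multiset.card A.charpoly.roots = Fintype.card n := by
    rw [← hsplit.natDegree_eq_card_roots, charpoly_natDegree_eq_dim]
  rw [hsplit.eval_eq_prod_roots_of_monic A.charpoly_monic,
    ← normHom_apply (α := ℂ) (Multiset.prod _), map_multiset_prod, Multiset.map_map, ← hroots,
    ← Multiset.prod_replicate, ← Multiset.map_const']
  refine Multiset.prod_map_le_prod_map₀ _ _ (fun _ _ => sub_nonneg.2 hz) fun μ hμ => ?_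
  have hμc : ‖μ‖ ≤ c := hA μ (mem_spectrum_iff_isRoot_charpoly.2 (isRoot_of_mem_roots hμ))
  have := norm_sub_norm_le z μ
  simp only [Function.comp_apply, normHom_apply]
  linarith

theorem forall_spectrum_norm_le_iff {A : Matrix n n ℂ} {c : ℝ} :
    (∀ α ∈ spectrum ℂ A, ‖α‖ ≤ c) ↔
      ∀ z : ℂ, c < ‖z‖ → (‖z‖ - c) ^ Fintype.card n ≤ ‖A.charpoly.eval z‖ := by
  refine ⟨fun hA z hz => pow_card_le_norm_eval_charpoly hA hz.le, fun h α hα => ?_⟩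
  by_contra! hαc
  have hroot : A.charpoly.eval α = 0 := mem_spectrum_iff_isRoot_charpoly.1 hα
  have := h α hαc
  rw [hroot, norm_zero] at this
  exact (pow_pos (sub_pos.2 hαc) _).not_ge this

theorem isClosed_setOf_forall_spectrum_norm_le (c : ℝ) :
    IsClosed {A : Matrix n n ℂ | ∀ α ∈ spectrum ℂ A, ‖α‖ ≤ c} := by
  simp only [forall_spectrum_norm_le_iff, Set.ofPred_forall]
  refine isClosed_iInter fun z => isClosed_iInter fun _ => isClosed_le continuous_const ?_
  simp only [eval_charpoly]
  fun_prop

end Charpoly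

section L2Operator

open scoped Matrix.Norms.L2Operator

variable {m n 𝕜 : Type*} [Fintype m] [Fintype n] [DecidableEq n] [RCLike 𝕜]

theorem sum_norm_sq_apply_le_l2_opNorm_sq (A : Matrix m n 𝕜) (j : n) :
    ∑ i, ‖A i j‖ ^ 2 ≤ ‖A‖ ^ 2 := by
  have h := A.l2_opNorm_mulVec (EuclideanSpace.single j 1)
  rw [PiLp.norm_single, norm_one, mul_one] at h
  calc ∑ i, ‖A i j‖ ^ 2
      = ‖(EuclideanSpace.equiv m 𝕜).symm (A *ᵥ EuclideanSpace.single j 1)‖ ^ 2 := by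
        simp [EuclideanSpace.norm_sq_eq]
    _ ≤ ‖A‖ ^ 2 := by gcongr

theorem sum_sum_norm_sq_le_card_mul_l2_opNorm_sq (A : Matrix m n 𝕜) :
    ∑ i, ∑ j, ‖A i j‖ ^ 2 ≤ Fintype.card n * ‖A‖ ^ 2 := by
  rw [Finset.sum_comm]
  simpa using Finset.sum_le_sum fun j (_ : j ∈ Finset.univ) =>
    A.sum_norm_sq_apply_le_l2_opNorm_sq j

theorem l2_opNorm_le_of_isStarNormal {A : Matrix n n ℂ} [IsStarNormal A] {c : ℝ} (hc : 0 ≤ c)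
    (hA : ∀ α ∈ spectrum ℂ A, ‖α‖ ≤ c) : ‖A‖ ≤ c := by
  lift c to NNReal using hc
  have : spectralRadius ℂ A ≤ c := iSup₂_le fun α hα => by exact_mod_cast hA α hα
  rw [IsStarNormal.spectralRadius_eq_nnnorm] at this
  exact_mod_cast this

theorem sum_sum_norm_sq_le_of_isStarNormal {A : Matrix n n ℂ} [IsStarNormal A] {c : ℝ}
    (hc : 0 ≤ c) (hA : ∀ α ∈ spectrum ℂ A, ‖α‖ ≤ c) :
    ∑ i, ∑ j, ‖A i j‖ ^ 2 ≤ Fintype.card n * c ^ 2 := by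
  grw [A.sum_sum_norm_sq_le_card_mul_l2_opNorm_sq, l2_opNorm_le_of_isStarNormal hc hA]

end L2Operator

section SelfCommutator

variable {n R : Type*} [Fintype n] [CommRing R] [StarRing R]

def selfCommutator (A : Matrix n n R) : Matrix n n R := A * Aᴴ - Aᴴ * A

theorem selfCommutator_smul (s : R) (A : Matrix n n R) :
    (s • A).selfCommutator = (s * star s) • A.selfCommutator := by
  rw [selfCommutator, selfCommutator, conjTranspose_smul, smul_mul_smul_comm, smul_mul_smul_comm,
    mul_comm (star s) s, smul_sub]

theorem isStarNormal_of_selfCommutator_eq_zero {A : Matrix n n R} (h : A.selfCommutator = 0) :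
    IsStarNormal A :=
  ⟨(sub_eq_zero.1 h).symm⟩

theorem continuous_selfCommutator [TopologicalSpace R] [IsTopologicalRing R] [ContinuousStar R] :
    Continuous (selfCommutator : Matrix n n R → Matrix n n R) := by
  unfold selfCommutator
  fun_prop

end SelfCommutator

end Matrix

attribute [local instance] Matrix.frobeniusNormedAddCommGroup Matrix.frobeniusNormedSpace

namespace Matrix

theorem frobenius_norm_sq {m n α : Type*} [Fintype m] [Fintype n] [NormedAddCommGroup α]
    (A : Matrix m n α) : ‖A‖ ^ 2 = ∑ i, ∑ j, ‖A i j‖ ^ 2 := by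
  rw [frobenius_norm_def, ← Real.sqrt_eq_rpow, Real.sq_sqrt (by positivity)]
  simp

variable {n : Type*} [Fintype n]

theorem norm_selfCommutator_smul (s : ℂ) (A : Matrix n n ℂ) :
    ‖(s • A).selfCommutator‖ = ‖s‖ ^ 2 * ‖A.selfCommutator‖ := by
  rw [selfCommutator_smul, norm_smul, norm_mul, norm_star, sq]

theorem selfCommutator_ne_zero [DecidableEq n] {A : Matrix n n ℂ} {c : ℝ} (hc : 0 ≤ c)
    (hcA : Fintype.card n * c ^ 2 < ‖A‖ ^ 2) (hA : ∀ α ∈ spectrum ℂ A, ‖α‖ ≤ c) :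
    A.selfCommutator ≠ 0 := by
  intro h
  have := isStarNormal_of_selfCommutator_eq_zero h
  have := sum_sum_norm_sq_le_of_isStarNormal hc hA
  rw [← frobenius_norm_sq] at this
  linarith

theorem exists_pos_mul_norm_sq_le_norm_selfCommutator [DecidableEq n] {c : ℝ} (hc : 0 ≤ c)
    (hcn : Fintype.card n * c ^ 2 < 1) :
    ∃ C > 0, ∀ A : Matrix n n ℂ, (∀ α ∈ spectrum ℂ A, ‖α‖ ≤ c * ‖A‖) →
      C * ‖A‖ ^ 2 ≤ ‖A.selfCommutator‖ := by
  set K := Metric.sphere 0 1 ∩ {A : Matrix n n ℂ | ∀ α ∈ spectrum ℂ A, ‖α‖ ≤ c}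
  have hK : IsCompact K :=
    (isCompact_sphere 0 1).inter_right (isClosed_setOf_forall_spectrum_norm_le c)
  obtain ⟨C, hC, hCK⟩ := hK.exists_forall_le' (a := 0)
    (continuous_norm.comp continuous_selfCommutator).continuousOn
    fun A ⟨hA1, hAc⟩ => norm_pos_iff.2 <| selfCommutator_ne_zero hc
      (by rwa [mem_sphere_zero_iff_norm.1 hA1, one_pow]) hAc
  refine ⟨C, hC, fun A hA => ?_⟩
  rcases eq_or_ne A 0 with rfl | hA0
  · simp
  have hnA : 0 < ‖A‖ := norm_pos_iff.2 hA0
  set s : ℂ := ((‖A‖⁻¹ : ℝ) : ℂ)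
  have hs : ‖s‖ = ‖A‖⁻¹ := by simp [s]
  have hsA : s • A ∈ K := by
    refine ⟨by simp [norm_smul, hs, hnA.ne'], fun α hα => ?_⟩
    have := spectrum.norm_le_of_mem_smul hA (by simpa [s] using hnA.ne') hα
    rwa [hs, mul_left_comm, inv_mul_cancel₀ hnA.ne', mul_one] at this
  have : C ≤ ‖(s • A).selfCommutator‖ := hCK _ hsA
  rwa [norm_selfCommutator_smul, hs, inv_pow, ← div_eq_inv_mul, le_div_iff₀ (by positivity)]
    at this

end Matrix

theorem frobNorm_eq_norm {r : ℕ} (A : Matrix (Fin r) (Fin r) ℂ) : frobNorm A = ‖A‖ := by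
  rw [frobNorm, ← Matrix.frobenius_norm_sq, Real.sqrt_sq (norm_nonneg A)]

/-- there is `C > 0`, depending only on `r`, such that for every `r×r`
complex matrix `A` and every `B > 0`: if every eigenvalue `α` of `A` satisfies
`|α| < B` and `‖A‖² ≥ 2rB²`, then `‖[A,Aᴴ]‖ ≥ C·‖A‖²`. -/
theorem commutator_lower_bound_small_eigenvalues (r : ℕ) (hr : 2 ≤ r) :
    ∃ C : ℝ, 0 < C ∧
      ∀ A : Matrix (Fin r) (Fin r) ℂ, ∀ B : ℝ, 0 < B →
        (∀ α ∈ spectrum ℂ A, ‖α‖ < B) →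
        2 * r * B ^ 2 ≤ frobNorm A ^ 2 →
        C * frobNorm A ^ 2 ≤ frobNorm (A * A.conjTranspose - A.conjTranspose * A) := by
  have hr0 : (0 : ℝ) < r := Nat.cast_pos.2 (by omega)
  set c := (Real.sqrt (2 * r))⁻¹
  have hc2 : c ^ 2 = (2 * (r : ℝ))⁻¹ := by rw [inv_pow, Real.sq_sqrt (by positivity)]
  obtain ⟨C, hC, hCA⟩ := Matrix.exists_pos_mul_norm_sq_le_norm_selfCommutator (n := Fin r)
    (c := c) (by positivity) (by rw [Fintype.card_fin, hc2]; field_simp; norm_num)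
  refine ⟨C, hC, fun A B hB hA hAB => ?_⟩
  simp only [frobNorm_eq_norm] at hAB ⊢
  refine hCA A fun α hα => (hA α hα).le.trans ?_
  have : B ^ 2 ≤ (c * ‖A‖) ^ 2 := by
    rw [mul_pow, hc2]
    field_simp
    linarith
  exact (pow_le_pow_iff_left₀ hB.le (by positivity) two_ne_zero).1 this
end

section
/- Let α ∈ ℂ with α ≠ 0. For every 0 < ε < 1 there exists δ > 0, depending only on ε and r, such that: if there exists an index 1 ≤ i ≤ r−1 with |e_{i+1}|_h / |e_i|_h ≤ ε|α| (equivalently h_{i+1}/hᵢ ≤ ε²|α|²), then |[f_α, (f_α)†_h]|_h ≥ δ·|f_α|_h². -/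
/-- The squared Hilbert–Schmidt norm, with respect to the Hermitian inner product
`⟨x,y⟩_h = Σᵢ hᵢ·xᵢ·conj(yᵢ)` on `V = ℂ^r` (for which `e₁,…,e_r` are orthogonal with
`|eᵢ|_h² = hᵢ`), of the endomorphism whose matrix in the standard basis is `M`
(`M j i` is the coefficient of `e_j` in the image of `e_i`):
`|f|_h² = Σ_{i,j} (h_j/h_i)·|M_{j,i}|²`. -/
noncomputable def hsNormSq {r : ℕ} (h : Fin r → ℝ) (M : Matrix (Fin r) (Fin r) ℂ) : ℝ :=
  ∑ i, ∑ j, (h j / h i) * ‖M j i‖ ^ 2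

/-- The matrix of the adjoint `f†_h`, with respect to `⟨·,·⟩_h`, of the endomorphism
with matrix `M`: `(f†_h)_{i,j} = (h_j/h_i)·conj(M_{j,i})`. -/
noncomputable def hAdjoint {r : ℕ} (h : Fin r → ℝ) (M : Matrix (Fin r) (Fin r) ℂ) :
    Matrix (Fin r) (Fin r) ℂ :=
  fun i j => ((h j / h i : ℝ) : ℂ) * (starRingEnd ℂ) (M j i)

/-- The matrix of the endomorphism `f_α` with `f_α(eᵢ) = e_{i+1}` for `i` below the top
index and `f_α(e_top) = α^r·e_bot` (`0`-based indexing of the basis `e₀,…,e_{r−1}`). -/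
def cyclicMat (r : ℕ) (α : ℂ) : Matrix (Fin r) (Fin r) ℂ :=
  fun i j =>
    if (i : ℕ) = (j : ℕ) + 1 then 1
    else if (i : ℕ) = 0 ∧ (j : ℕ) = r - 1 then α ^ r else 0

/-!
`f_α` is a weighted cyclic shift `f(eᵢ) = cᵢ·e_{i+1}`, so `f f†` and `f† f` are diagonal, their
entries being the weights `wᵢ = |f(eᵢ)|²/|eᵢ|²`, shifted by one index against each other. Hence
`|f|² = Σ wᵢ` and `|[f, f†]|² = Σ (w_{i+1} − wᵢ)²`. The weights multiply to `|α|^{2r}`, so the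
largest is at least `|α|²`, while the hypothesis makes some `wᵢ ≤ ε²|α|²`. The gap between the two
is at least `(1 − ε²)·max w ≥ (1 − ε²)/r · Σ w`, and telescoping around the cycle bounds it by
`r·|[f, f†]|`.
-/

open Finset Matrix
open scoped Fin.CommRing

section Oscillation

variable {r : ℕ} [NeZero r]

theorem abs_sub_le_mul_sqrt_sum_sq_sub (a : Fin r → ℝ) (i k : Fin r) :
    |a k - a i| ≤ r * √(∑ j, (a (j + 1) - a j) ^ 2) := by
  set S := √(∑ j, (a (j + 1) - a j) ^ 2)
  have step_le (j : Fin r) : |a (j + 1) - a j| ≤ S :=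
    Real.abs_le_sqrt (single_le_sum (f := fun j => (a (j + 1) - a j) ^ 2)
      (fun _ _ => sq_nonneg _) (mem_univ j))
  set t := ((k - i : Fin r) : ℕ)
  have telescope : a k - a i = ∑ s ∈ range t, (a (i + (s + 1 : ℕ)) - a (i + s)) := by
    rw [sum_range_sub (fun s => a (i + s)), Nat.cast_zero, add_zero, Fin.cast_val_eq_self,
      add_sub_cancel]
  calc |a k - a i| ≤ ∑ s ∈ range t, |a (i + (s + 1 : ℕ)) - a (i + s)| := by
        rw [telescope]; exact abs_sum_le_sum_abs _ _
    _ ≤ ∑ _s ∈ range t, S := by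
        refine sum_le_sum fun s _ => ?_
        rw [Nat.cast_succ, ← add_assoc]
        exact step_le _
    _ = t * S := by rw [sum_const, card_range, nsmul_eq_mul]
    _ ≤ r * S := by gcongr; exact_mod_cast (k - i).isLt.le

theorem one_sub_mul_sum_le_sq_mul_sqrt_sum_sq_sub {a : Fin r → ℝ} {m t : ℝ} {i k : Fin r}
    (ht0 : 0 ≤ t) (ht1 : t ≤ 1) (hk : m ≤ a k) (hi : a i ≤ t * m) :
    (1 - t) * ∑ j, a j ≤ r ^ 2 * √(∑ j, (a (j + 1) - a j) ^ 2) := by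
  obtain ⟨kmax, -, hmax⟩ := exists_max_image univ a univ_nonempty
  have hsum : ∑ j, a j ≤ r * a kmax := by
    simpa using sum_le_card_nsmul univ a (a kmax) hmax
  have hgap : (1 - t) * a kmax ≤ a kmax - a i := by
    have : t * m ≤ t * a kmax := by gcongr; exact hk.trans (hmax k (mem_univ k))
    linarith
  calc (1 - t) * ∑ j, a j ≤ r * ((1 - t) * a kmax) := by
        rw [mul_left_comm]; exact mul_le_mul_of_nonneg_left hsum (by linarith)
    _ ≤ r * |a kmax - a i| := by gcongr; exact hgap.trans (le_abs_self _)
    _ ≤ r * (r * √(∑ j, (a (j + 1) - a j) ^ 2)) := by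
        gcongr; exact abs_sub_le_mul_sqrt_sum_sq_sub a i kmax
    _ = _ := by ring

end Oscillation

theorem exists_le_of_prod_eq_pow {ι : Type*} [Fintype ι] [Nonempty ι] {a : ι → ℝ}
    (ha : ∀ i, 0 < a i) {m : ℝ} (hprod : ∏ i, a i = m ^ Fintype.card ι) : ∃ k, m ≤ a k := by
  by_contra! hlt
  have := prod_lt_prod_of_nonempty (s := univ) (fun i _ => ha i) (fun i _ => hlt i) univ_nonempty
  rw [hprod, prod_const, card_univ] at this
  exact this.false

theorem hsNormSq_diagonal {r : ℕ} {h : Fin r → ℝ} (hh : ∀ i, h i ≠ 0) (d : Fin r → ℝ) :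
    hsNormSq h (diagonal fun i => (d i : ℂ)) = ∑ i, d i ^ 2 := by
  refine sum_congr rfl fun i _ => ?_
  rw [Fintype.sum_eq_single i, diagonal_apply_eq, div_self (hh i), one_mul, Complex.norm_real,
    Real.norm_eq_abs, sq_abs]
  intro j hj
  rw [diagonal_apply_ne _ hj, norm_zero]
  ring

section WeightedShift

variable {r : ℕ} [NeZero r] (h : Fin r → ℝ) (c : Fin r → ℂ)

def shiftMat : Matrix (Fin r) (Fin r) ℂ :=
  Matrix.of fun j i => if j = i + 1 then c i else 0

@[simp]
theorem shiftMat_apply (i j : Fin r) : shiftMat c j i = if j = i + 1 then c i else 0 := rfl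

noncomputable def shiftWeight (i : Fin r) : ℝ := h (i + 1) / h i * ‖c i‖ ^ 2

theorem hAdjoint_shiftMat_apply (i j : Fin r) :
    hAdjoint h (shiftMat c) i j =
      if j = i + 1 then ((h (i + 1) / h i : ℝ) : ℂ) * starRingEnd ℂ (c i) else 0 := by
  rw [hAdjoint, shiftMat_apply]
  split_ifs with hij
  · rw [hij]
  · rw [map_zero, mul_zero]

theorem shiftMat_mul_hAdjoint :
    shiftMat c * hAdjoint h (shiftMat c) = diagonal fun i => (shiftWeight h c (i - 1) : ℂ) := by
  ext i j
  rw [mul_apply, Fintype.sum_eq_single (i - 1), diagonal_apply, shiftMat_apply,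
    hAdjoint_shiftMat_apply, sub_add_cancel, if_pos rfl]
  · by_cases hij : i = j
    · rw [if_pos hij.symm, if_pos hij, shiftWeight, sub_add_cancel, mul_left_comm,
        Complex.mul_conj']
      push_cast; rfl
    · rw [if_neg (Ne.symm hij), if_neg hij, mul_zero]
  · intro k hk
    rw [shiftMat_apply, if_neg (fun hik => hk (by rw [hik, add_sub_cancel_right])), zero_mul]

theorem hAdjoint_mul_shiftMat :
    hAdjoint h (shiftMat c) * shiftMat c = diagonal fun i => (shiftWeight h c i : ℂ) := by
  ext i j
  rw [mul_apply, Fintype.sum_eq_single (i + 1), diagonal_apply, shiftMat_apply,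
    hAdjoint_shiftMat_apply, if_pos rfl]
  · by_cases hij : i = j
    · rw [if_pos (by rw [hij]), if_pos hij, ← hij, shiftWeight, mul_assoc, Complex.conj_mul']
      push_cast; rfl
    · rw [if_neg (fun h1 => hij (add_right_cancel h1)), if_neg hij, mul_zero]
  · intro k hk
    rw [hAdjoint_shiftMat_apply, if_neg hk, zero_mul]

variable {h}

theorem hsNormSq_shiftMat : hsNormSq h (shiftMat c) = ∑ i, shiftWeight h c i := by
  refine sum_congr rfl fun i _ => ?_
  rw [Fintype.sum_eq_single (i + 1), shiftMat_apply, if_pos rfl, shiftWeight]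
  intro j hj
  rw [shiftMat_apply, if_neg hj, norm_zero]
  ring

theorem hsNormSq_commutator_shiftMat (hh : ∀ i, h i ≠ 0) :
    hsNormSq h (shiftMat c * hAdjoint h (shiftMat c) - hAdjoint h (shiftMat c) * shiftMat c) =
      ∑ i, (shiftWeight h c (i + 1) - shiftWeight h c i) ^ 2 := by
  rw [shiftMat_mul_hAdjoint, hAdjoint_mul_shiftMat, diagonal_sub]
  simp_rw [← Complex.ofReal_sub]
  rw [hsNormSq_diagonal hh, ← Equiv.sum_comp (Equiv.addRight (1 : Fin r))]
  refine sum_congr rfl fun i _ => ?_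
  rw [Equiv.coe_addRight, add_sub_cancel_right, ← neg_sub, neg_sq]

theorem shiftWeight_pos (hh : ∀ i, 0 < h i) (hc : ∀ i, c i ≠ 0) (i : Fin r) :
    0 < shiftWeight h c i :=
  mul_pos (div_pos (hh _) (hh _)) (pow_pos (norm_pos_iff.mpr (hc i)) 2)

theorem prod_shiftWeight (hh : ∀ i, h i ≠ 0) : ∏ i, shiftWeight h c i = ‖∏ i, c i‖ ^ 2 := by
  have hcycle : ∏ i, h (i + 1) = ∏ i, h i := Equiv.prod_comp (Equiv.addRight (1 : Fin r)) h
  rw [norm_prod, ← prod_pow, ← one_mul (∏ i, ‖c i‖ ^ 2)]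
  simp only [shiftWeight]
  rw [prod_mul_distrib, prod_div_distrib, hcycle, div_self (prod_ne_zero_iff.mpr fun i _ => hh i)]

end WeightedShift

section Cyclic

def cyclicCoeff (r : ℕ) (α : ℂ) (i : Fin r) : ℂ := if (i : ℕ) = r - 1 then α ^ r else 1

variable {r : ℕ} (α : ℂ)

theorem cyclicMat_eq_shiftMat [NeZero r] : cyclicMat r α = shiftMat (cyclicCoeff r α) := by
  obtain ⟨n, rfl⟩ := Nat.exists_eq_succ_of_ne_zero (NeZero.ne r)
  ext j i
  simp only [cyclicMat, shiftMat_apply, cyclicCoeff, Fin.ext_iff, Fin.val_add_one, Fin.val_last]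
  split_ifs <;> first | rfl | omega

theorem prod_cyclicCoeff [NeZero r] : ∏ i, cyclicCoeff r α i = α ^ r := by
  obtain ⟨n, rfl⟩ := Nat.exists_eq_succ_of_ne_zero (NeZero.ne r)
  have is_last (i : Fin (n + 1)) : (i : ℕ) = n + 1 - 1 ↔ i = Fin.last n := by
    rw [Fin.ext_iff, Fin.val_last, Nat.add_sub_cancel]
  simp only [cyclicCoeff, is_last, prod_ite_eq', mem_univ, if_true]

variable {α}

theorem cyclicCoeff_ne_zero (hα : α ≠ 0) (i : Fin r) : cyclicCoeff r α i ≠ 0 := by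
  unfold cyclicCoeff
  split_ifs
  exacts [pow_ne_zero _ hα, one_ne_zero]

theorem cyclicCoeff_of_lt {i : Fin r} (hi : (i : ℕ) + 1 < r) : cyclicCoeff r α i = 1 :=
  if_neg (by omega)

end Cyclic

/-- for `α ≠ 0` and `0 < ε < 1` there is `δ > 0`, depending only on `ε`
and `r`, such that if `h_{i+1} ≤ ε²|α|²·hᵢ` for some consecutive pair of indices
(equivalently `|e_{i+1}|_h/|eᵢ|_h ≤ ε|α|`), then `|[f_α,(f_α)†_h]|_h ≥ δ·|f_α|_h²`. -/
theorem cyclic_commutator_lower_bound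
    (r : ℕ) (hr : 2 ≤ r) (ε : ℝ) (hε0 : 0 < ε) (hε1 : ε < 1) :
    ∃ δ : ℝ, 0 < δ ∧
      ∀ h : Fin r → ℝ, (∀ i, 0 < h i) →
      ∀ α : ℂ, α ≠ 0 →
        (∃ i j : Fin r, (j : ℕ) = (i : ℕ) + 1 ∧
            h j ≤ ε ^ 2 * ‖α‖ ^ 2 * h i) →
        δ * hsNormSq h (cyclicMat r α)
          ≤ Real.sqrt (hsNormSq h
              (cyclicMat r α * hAdjoint h (cyclicMat r α)
                - hAdjoint h (cyclicMat r α) * cyclicMat r α)) := by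
  have : NeZero r := ⟨by omega⟩
  have hr_sq : (0 : ℝ) < r ^ 2 := pow_pos (Nat.cast_pos.mpr (by omega)) 2
  have hε_sq : ε ^ 2 < 1 := pow_lt_one₀ hε0.le hε1 two_ne_zero
  refine ⟨(1 - ε ^ 2) / r ^ 2, div_pos (sub_pos.mpr hε_sq) hr_sq, ?_⟩
  rintro h hpos α hα ⟨i, j, hij, hsmall⟩
  have hh (i : Fin r) : h i ≠ 0 := (hpos i).ne'
  obtain ⟨k, hk⟩ : ∃ k, ‖α‖ ^ 2 ≤ shiftWeight h (cyclicCoeff r α) k := by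
    refine exists_le_of_prod_eq_pow (shiftWeight_pos _ hpos (cyclicCoeff_ne_zero hα)) ?_
    rw [prod_shiftWeight _ hh, prod_cyclicCoeff, norm_pow, Fintype.card_fin, pow_right_comm]
  have hj : j = i + 1 := Fin.ext (by rw [Fin.val_add_one_of_lt' (hij ▸ j.isLt), hij])
  have hi : shiftWeight h (cyclicCoeff r α) i ≤ ε ^ 2 * ‖α‖ ^ 2 := by
    rw [shiftWeight, cyclicCoeff_of_lt (hij ▸ j.isLt), norm_one, one_pow, mul_one, ← hj,
      div_le_iff₀ (hpos i)]
    exact hsmall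
  rw [cyclicMat_eq_shiftMat, hsNormSq_shiftMat, hsNormSq_commutator_shiftMat _ hh,
    div_mul_eq_mul_div, div_le_iff₀ hr_sq, mul_comm _ (r ^ 2 : ℝ)]
  exact one_sub_mul_sum_le_sq_mul_sqrt_sum_sq_sub (sq_nonneg ε) hε_sq.le hk hi
end

section
/- Let B, C > 0 and suppose |eᵢ|_h / |e_{i+1}|_h ≤ B for every 1 ≤ i ≤ r−1 (equivalently hᵢ/h_{i+1} ≤ B²). Let a₁,…,a_r be positive reals with ∏ᵢ aᵢ = 1, let s be the endomorphism with s(eᵢ) = aᵢ·eᵢ and s^{−1/2} the endomorphism with s^{−1/2}(eᵢ) = aᵢ^{−1/2}·eᵢ, and assume |s|_h ≤ C. Let α ∈ ℂ. Then there exist constants C₁ > 0 and ε₁ > 0, depending only on B, C and r, such that for every 0 < ε < ε₁: if |[f_α, s]∘s^{−1/2}|_h ≤ ε, then |s − id_V|_h ≤ C₁·ε. -/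
open Matrix

section Elementary

variable {ι : Type*} [Fintype ι]

lemma abs_le_of_sum_sq_le {x : ι → ℝ} {C : ℝ} (hC : 0 ≤ C) (hx : ∑ i, x i ^ 2 ≤ C ^ 2)
    (i : ι) : |x i| ≤ C :=
  abs_le_of_sq_le_sq
    ((Finset.single_le_sum (fun j _ => sq_nonneg (x j)) (Finset.mem_univ i)).trans hx) hC

lemma sum_sq_le_sq_card_mul {x : ι → ℝ} {R : ℝ} (hx : ∀ i, |x i| ≤ R) :
    ∑ i, x i ^ 2 ≤ (Fintype.card ι * R) ^ 2 := by
  have hcard : (Fintype.card ι : ℝ) ≤ (Fintype.card ι : ℝ) ^ 2 := by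
    exact_mod_cast Nat.le_self_pow two_ne_zero _
  calc ∑ i, x i ^ 2 ≤ ∑ _i : ι, R ^ 2 :=
        Finset.sum_le_sum fun i _ => sq_le_sq' (abs_le.mp (hx i)).1 (abs_le.mp (hx i)).2
    _ = Fintype.card ι * R ^ 2 := by simp
    _ ≤ (Fintype.card ι * R) ^ 2 := by rw [mul_pow]; gcongr

lemma abs_sub_one_le_of_prod_eq_one [Nonempty ι] {a : ι → ℝ} (ha : ∀ i, 0 < a i)
    (hprod : ∏ i, a i = 1) {R : ℝ} (hR : ∀ i j, |a i - a j| ≤ R) (i : ι) :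
    |a i - 1| ≤ R := by
  obtain ⟨j, hj⟩ : ∃ j, 1 ≤ a j := by
    by_contra! hlt
    have := Finset.prod_lt_prod_of_nonempty (fun i _ => ha i) (fun i _ => hlt i)
      Finset.univ_nonempty
    simp [hprod] at this
  obtain ⟨k, hk⟩ : ∃ k, a k ≤ 1 := by
    by_contra! hgt
    have := Finset.prod_lt_prod_of_nonempty (fun _ _ => one_pos) (fun i _ => hgt i)
      Finset.univ_nonempty
    simp [hprod] at this
  have hij := abs_le.mp (hR i j)
  have hik := abs_le.mp (hR i k)
  exact abs_le.mpr ⟨by linarith, by linarith⟩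

end Elementary

section FinIndexed

variable {r : ℕ}

lemma abs_sub_le_of_abs_sub_succ_le {a : Fin r → ℝ} {δ : ℝ} (hδ : 0 ≤ δ)
    (hadj : ∀ i j : Fin r, (j : ℕ) = i + 1 → |a i - a j| ≤ δ) (i j : Fin r) :
    |a i - a j| ≤ (r - 1) * δ := by
  have hdist : ∀ n : ℕ, ∀ i j : Fin r, (j : ℕ) = i + n → |a i - a j| ≤ n * δ := by
    intro n
    induction n with
    | zero => intro i j hij; simp [Fin.ext hij.symm]
    | succ n ih =>
      intro i j hij
      let k : Fin r := ⟨i + n, by omega⟩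
      calc |a i - a j| ≤ |a i - a k| + |a k - a j| := abs_sub_le _ _ _
        _ ≤ n * δ + δ := add_le_add (ih i k rfl) (hadj k j (by simp [k]; omega))
        _ = (n + 1 : ℕ) * δ := by push_cast; ring
  have hle : ∀ i j : Fin r, i ≤ j → |a i - a j| ≤ (r - 1) * δ := by
    intro i j hij
    have hij' := Fin.le_iff_val_le_val.mp hij
    refine (hdist (j - i) i j (by omega)).trans (mul_le_mul_of_nonneg_right ?_ hδ)
    rw [le_sub_iff_add_le]
    exact_mod_cast (by omega : (j : ℕ) - i + 1 ≤ r)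
  rcases le_total i j with hij | hji
  · exact hle i j hij
  · rw [abs_sub_comm]; exact hle j i hji

variable {h : Fin r → ℝ}

lemma hsNormSq_diagonal_ofReal (hh : ∀ i, h i ≠ 0) (d : Fin r → ℝ) :
    hsNormSq h (diagonal fun i => (d i : ℂ)) = ∑ i, d i ^ 2 := by
  refine Finset.sum_congr rfl fun i _ => ?_
  rw [Finset.sum_eq_single i]
  · simp [div_self (hh i), sq_abs]
  · intro j _ hji; simp [diagonal_apply_ne _ hji]
  · simp

lemma div_mul_norm_sq_le_hsNormSq (hh : ∀ i, 0 < h i) (M : Matrix (Fin r) (Fin r) ℂ)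
    (i j : Fin r) : h j / h i * ‖M j i‖ ^ 2 ≤ hsNormSq h M := by
  have hterm : ∀ i j : Fin r, 0 ≤ h j / h i * ‖M j i‖ ^ 2 := fun i j => by
    have := hh i; have := hh j; positivity
  calc h j / h i * ‖M j i‖ ^ 2 ≤ ∑ j', h j' / h i * ‖M j' i‖ ^ 2 :=
        Finset.single_le_sum (fun j' _ => hterm i j') (Finset.mem_univ j)
    _ ≤ hsNormSq h M :=
        Finset.single_le_sum (f := fun i' => ∑ j', h j' / h i' * ‖M j' i'‖ ^ 2)
          (fun i' _ => Finset.sum_nonneg fun j' _ => hterm i' j') (Finset.mem_univ i)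

lemma cyclicMat_commutator_mul_diagonal_apply (α : ℂ) (a b : Fin r → ℂ) {i j : Fin r}
    (hij : (j : ℕ) = i + 1) :
    ((cyclicMat r α * diagonal a - diagonal a * cyclicMat r α) * diagonal b) j i
      = (a i - a j) * b i := by
  simp [mul_diagonal, diagonal_mul, cyclicMat, hij]

lemma abs_sub_le_of_hsNormSq_commutator_le (hh : ∀ i, 0 < h i) {B : ℝ} (hB : 0 ≤ B)
    (hhB : ∀ i j : Fin r, (j : ℕ) = i + 1 → h i ≤ B ^ 2 * h j)
    {a : Fin r → ℝ} (ha : ∀ i, 0 < a i) {C : ℝ} (haC : ∀ i, a i ≤ C) (α : ℂ) {ε : ℝ}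
    (hε : 0 ≤ ε)
    (hcomm : hsNormSq h
      ((cyclicMat r α * diagonal (fun i => (a i : ℂ))
          - diagonal (fun i => (a i : ℂ)) * cyclicMat r α)
        * diagonal (fun i => (((Real.sqrt (a i))⁻¹ : ℝ) : ℂ))) ≤ ε ^ 2)
    {i j : Fin r} (hij : (j : ℕ) = i + 1) :
    |a i - a j| ≤ B * Real.sqrt C * ε := by
  set M : Matrix (Fin r) (Fin r) ℂ := (cyclicMat r α * diagonal (fun i => (a i : ℂ))
      - diagonal (fun i => (a i : ℂ)) * cyclicMat r α)
    * diagonal (fun i => (((Real.sqrt (a i))⁻¹ : ℝ) : ℂ)) with hM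
  have hentry : ‖M j i‖ ^ 2 = (a i - a j) ^ 2 / a i := by
    rw [hM, cyclicMat_commutator_mul_diagonal_apply α _ _ hij, ← Complex.ofReal_sub,
      ← Complex.ofReal_mul, Complex.norm_real, Real.norm_eq_abs, sq_abs, mul_pow, inv_pow,
      Real.sq_sqrt (ha i).le, div_eq_mul_inv]
  have hsq : (a i - a j) ^ 2 / a i ≤ B ^ 2 * ε ^ 2 :=
    calc (a i - a j) ^ 2 / a i = h i / h i * ((a i - a j) ^ 2 / a i) := by
          rw [div_self (hh i).ne', one_mul]
      _ ≤ B ^ 2 * h j / h i * ((a i - a j) ^ 2 / a i) := by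
          have := hh i; have := ha i; gcongr; exact hhB i j hij
      _ = B ^ 2 * (h j / h i * ‖M j i‖ ^ 2) := by rw [hentry]; ring
      _ ≤ B ^ 2 * ε ^ 2 := by
          gcongr; exact (div_mul_norm_sq_le_hsNormSq hh M i j).trans hcomm
  have hC : 0 ≤ C := (ha i).le.trans (haC i)
  refine abs_le_of_sq_le_sq ?_ (by positivity)
  calc (a i - a j) ^ 2 ≤ B ^ 2 * ε ^ 2 * a i := (div_le_iff₀ (ha i)).mp hsq
    _ ≤ B ^ 2 * ε ^ 2 * C := by gcongr; exact haC i
    _ = (B * Real.sqrt C * ε) ^ 2 := by rw [mul_pow, mul_pow, Real.sq_sqrt hC]; ring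

end FinIndexed

/-- given `B, C > 0`, there are `C₁ > 0` and `ε₁ > 0`, depending only on
`B`, `C` and `r`, such that for any weights `h` with `hᵢ/h_{i+1} ≤ B²` (equivalently
`|eᵢ|_h/|e_{i+1}|_h ≤ B`), any diagonal automorphism `s(eᵢ) = aᵢ·eᵢ` with `aᵢ > 0`,
`∏ aᵢ = 1` and `|s|_h ≤ C`, any `α ∈ ℂ`, and any `0 < ε < ε₁`:
if `|[f_α,s]∘s^{−1/2}|_h ≤ ε` then `|s − id|_h ≤ C₁·ε`. -/
theorem diagonal_close_to_identity_from_small_commutator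
    (r : ℕ) (hr : 2 ≤ r) (B C : ℝ) (hB : 0 < B) (hC : 0 < C) :
    ∃ C₁ : ℝ, 0 < C₁ ∧ ∃ ε₁ : ℝ, 0 < ε₁ ∧
      ∀ h : Fin r → ℝ, (∀ i, 0 < h i) →
        (∀ i j : Fin r, (j : ℕ) = (i : ℕ) + 1 → h i ≤ B ^ 2 * h j) →
      ∀ a : Fin r → ℝ, (∀ i, 0 < a i) → (∏ i, a i = 1) →
        Real.sqrt (hsNormSq h (Matrix.diagonal fun i => (a i : ℂ))) ≤ C →
      ∀ α : ℂ, ∀ ε : ℝ, 0 < ε → ε < ε₁ →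
        Real.sqrt (hsNormSq h
            ((cyclicMat r α * Matrix.diagonal (fun i => (a i : ℂ))
                - Matrix.diagonal (fun i => (a i : ℂ)) * cyclicMat r α)
              * Matrix.diagonal (fun i => (((Real.sqrt (a i))⁻¹ : ℝ) : ℂ)))) ≤ ε →
        Real.sqrt (hsNormSq h
            (Matrix.diagonal (fun i => (a i : ℂ)) - 1)) ≤ C₁ * ε := by
  have : Nonempty (Fin r) := ⟨⟨0, by omega⟩⟩
  have hC₁ : 0 < (r : ℝ) * (r - 1) * B * Real.sqrt C := by
    have : (2 : ℝ) ≤ r := by exact_mod_cast hr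
    have := Real.sqrt_pos.mpr hC
    exact mul_pos (mul_pos (mul_pos (by linarith) (by linarith)) hB) this
  refine ⟨_, hC₁, 1, one_pos, fun h hh hhB a ha hprod hs α ε hε _ hcomm => ?_⟩
  have hh₀ : ∀ i, h i ≠ 0 := fun i => (hh i).ne'
  rw [Real.sqrt_le_left hC.le, hsNormSq_diagonal_ofReal hh₀] at hs
  have haC i : a i ≤ C := (le_abs_self _).trans (abs_le_of_sum_sq_le hC.le hs i)
  have hadj i j := abs_sub_le_of_hsNormSq_commutator_le hh hB.le hhB ha haC α hε.le
    ((Real.sqrt_le_left hε.le).mp hcomm) (i := i) (j := j)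
  have hone := abs_sub_one_le_of_prod_eq_one ha hprod
    (abs_sub_le_of_abs_sub_succ_le (by positivity) hadj)
  have hsub : diagonal (fun i => (a i : ℂ)) - 1 = diagonal fun i => ((a i - 1 : ℝ) : ℂ) := by
    rw [← diagonal_one, diagonal_sub]; push_cast; rfl
  rw [hsub, hsNormSq_diagonal_ofReal hh₀, Real.sqrt_le_left (by positivity)]
  calc ∑ i, (a i - 1) ^ 2 ≤ (r * ((r - 1) * (B * Real.sqrt C * ε))) ^ 2 := by
        simpa using sum_sq_le_sq_card_mul hone
    _ = _ := by ring
end
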